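/- arXiv:2306.02310 — 3 statements merged into one kernel-verified Lean document; each statement's English description precedes it below -/
import Mathlib

section
/- For every γ∈𝔇, every n≥0 and every x∈(ĥb_{n+1}, ĥb_n), the derivative of the (n+1)-st iterate satisfies (T_γ^{n+1})'(x) > 3/2. In particular, the first return map of T_γ to Y=[1/2,1] is uniformly expanding with expansion constant λ=3/2 on each interval J_n=(ĥb_{n+1}, ĥb_n). -/
open MeasureTheory Real Set Filter

noncomputable section

/-- Left branch of the map: `f₁(x) = x(1 + 2^α x^α)`. -/
def f1 (α x : ℝ) : ℝ := x * (1 + 2 ^ α * x ^ α)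

/-- Right branch of the map: `f₂(x) = 2^β (x - 1/2)^β`. -/
def f2 (β x : ℝ) : ℝ := 2 ^ β * (x - 1/2) ^ β

/-- Inverse of the right branch: `g₂(x) = (x^{1/β} + 1)/2`. -/
def g2 (β x : ℝ) : ℝ := (x ^ (1/β) + 1) / 2

/-- The intermittent map with critical point. -/
def T (α β x : ℝ) : ℝ := if x < 1/2 then f1 α x else f2 β x

/-- The parameter region 𝔇. -/
def Dom (α β : ℝ) : Prop := 0 < α ∧ α < 1 ∧ 1 ≤ β ∧ α * β < 1

/-- `g` is the inverse of the left branch `f₁` with parameter `α`. -/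
def IsG1 (α : ℝ) (g : ℝ → ℝ) : Prop :=
  ∀ x ∈ Icc (0:ℝ) 1, g x ∈ Icc (0:ℝ) (1/2) ∧ f1 α (g x) = x

/-- The cone `C_a(γ)` of Cui. -/
def Cone (a α β : ℝ) (f : ℝ → ℝ) : Prop :=
  IntervalIntegrable f volume 0 1 ∧
  (∀ x ∈ Ioc (0:ℝ) 1, 0 ≤ f x) ∧
  (∀ x ∈ Ioc (0:ℝ) 1, ∀ y ∈ Ioc (0:ℝ) 1, x ≤ y → f y ≤ f x) ∧
  (∀ x ∈ Ioc (0:ℝ) 1, ∀ y ∈ Ioc (0:ℝ) 1, x ≤ y → x ^ (α+1) * f x ≤ y ^ (α+1) * f y) ∧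
  (∀ x ∈ Ioc (0:ℝ) 1, ∫ t in (0:ℝ)..x, f t ≤ a * x ^ (1/β - α) * ∫ t in (0:ℝ)..1, f t)

/-- The threshold `a₀(γ)`. -/
def a0 (α β : ℝ) : ℝ := 2 ^ (β+1) * (1 + 2 ^ α) ^ (1 + α - 1/β) / (1/β - α)

/-- The operator `N_{γ,1}` (given the inverse left branch `g1`). -/
def N1 (g1 : ℝ → ℝ) (φ : ℝ → ℝ) (x : ℝ) : ℝ := deriv g1 x * φ (g1 x)

/-- The operator `N_{γ,2}`. -/
def N2 (β : ℝ) (φ : ℝ → ℝ) (x : ℝ) : ℝ := deriv (g2 β) x * φ (g2 β x)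

/-- The transfer operator `L_γ` (given the inverse left branch `g1`). -/
def Lop (β : ℝ) (g1 : ℝ → ℝ) (φ : ℝ → ℝ) (x : ℝ) : ℝ := N1 g1 φ x + N2 β φ x

/-- `X_{γ,1} = (∂_α T_γ) ∘ g_{γ,1}`. -/
def X1 (α : ℝ) (g1 : ℝ → ℝ) (x : ℝ) : ℝ :=
  2 ^ α * g1 x ^ (1+α) * (Real.log 2 + Real.log (g1 x))

/-- `X_{γ,2} = (∂_β T_γ) ∘ g_{γ,2}`. -/
def X2 (β x : ℝ) : ℝ := (1/β) * x * Real.log x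

/-- The sequence `b_n` of preimages of 1/2 under the left branch. -/
def IsB (α : ℝ) (b : ℕ → ℝ) : Prop :=
  b 0 = 1/2 ∧ ∀ n, b (n+1) ∈ Icc (0:ℝ) (1/2) ∧ f1 α (b (n+1)) = b n

/-- The sequence `ĥb_n`, determined by `ĥb_{n+1} - 1/2 = (1/2) b_n^{1/β}`. -/
def IsBh (β : ℝ) (b bh : ℕ → ℝ) : Prop :=
  bh 0 = 1 ∧ ∀ n, bh (n+1) = 1/2 + (1/2) * (b n) ^ (1/β)


section Auxiliary

variable {α β : ℝ}

lemma rpow2_pos {a : ℝ} : (0:ℝ) < 2 ^ a := Real.rpow_pos_of_pos two_pos a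

lemma f1_factor_pos (hα : 0 < α) {x : ℝ} (hx : 0 ≤ x) : (0:ℝ) < 1 + 2 ^ α * x ^ α := by
  have h1 : (0:ℝ) ≤ 2 ^ α * x ^ α := mul_nonneg rpow2_pos.le (Real.rpow_nonneg hx α)
  linarith

lemma f1_nonneg (hα : 0 < α) {x : ℝ} (hx : 0 ≤ x) : 0 ≤ f1 α x :=
  mul_nonneg hx (f1_factor_pos hα hx).le

lemma f1_pos (hα : 0 < α) {x : ℝ} (hx : 0 < x) : 0 < f1 α x :=
  mul_pos hx (f1_factor_pos hα hx.le)

lemma f1_mono (hα : 0 < α) {x y : ℝ} (hx : 0 ≤ x) (hxy : x < y) :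
    f1 α x < f1 α y := by
  unfold f1
  have hy : 0 < y := hx.trans_lt hxy
  have hxa : x ^ α ≤ y ^ α := Real.rpow_le_rpow hx hxy.le hα.le
  have h2 : 1 + 2 ^ α * x ^ α ≤ 1 + 2 ^ α * y ^ α := by
    have := mul_le_mul_of_nonneg_left hxa (rpow2_pos (a := α)).le
    linarith
  exact mul_lt_mul hxy h2 (f1_factor_pos hα hx) hy.le

lemma f1_lt_self (hα : 0 < α) {x : ℝ} (hx : 0 < x) : x < f1 α x := by
  unfold f1
  have h : (0:ℝ) < 2 ^ α * x ^ α := mul_pos rpow2_pos (Real.rpow_pos_of_pos hx α)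
  nlinarith

lemma f1_iter_pos (hα : 0 < α) (n : ℕ) : ∀ {x : ℝ}, 0 < x → 0 < (f1 α)^[n] x := by
  induction n with
  | zero => intro x hx; simpa using hx
  | succ n ih =>
    intro x hx
    rw [Function.iterate_succ_apply]
    exact ih (f1_pos hα hx)

lemma f1_iter_mono (hα : 0 < α) (n : ℕ) : ∀ {x y : ℝ}, 0 ≤ x → x < y →
    (f1 α)^[n] x < (f1 α)^[n] y := by
  induction n with
  | zero => intro x y _ h; simpa using h
  | succ n ih =>
    intro x y hx h
    rw [Function.iterate_succ_apply, Function.iterate_succ_apply]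
    exact ih (f1_nonneg hα hx) (f1_mono hα hx h)

lemma b_pos (hα : 0 < α) {b : ℕ → ℝ} (hb : IsB α b) : ∀ n, 0 < b n := by
  intro n
  induction n with
  | zero => rw [hb.1]; norm_num
  | succ n ih =>
    obtain ⟨hmem, heq⟩ := hb.2 n
    rcases lt_or_eq_of_le hmem.1 with h | h
    · exact h
    · rw [← heq, ← h] at ih
      simp [f1] at ih

lemma b_le_half {b : ℕ → ℝ} (hb : IsB α b) : ∀ n, b n ≤ 1/2 := by
  intro n
  cases n with
  | zero => rw [hb.1]
  | succ n => exact (hb.2 n).1.2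

lemma iter_b (hα : 0 < α) {b : ℕ → ℝ} (hb : IsB α b) :
    ∀ n, (f1 α)^[n] (b n) = 1/2 := by
  intro n
  induction n with
  | zero => simpa using hb.1
  | succ n ih => rw [Function.iterate_succ_apply, (hb.2 n).2, ih]

lemma hasDerivAt_T_left (hα : 0 < α) {y : ℝ} (hy0 : 0 < y) (hy : y < 1/2) :
    HasDerivAt (T α β) (1 * (1 + 2 ^ α * y ^ α) + y * (2 ^ α * (α * y ^ (α - 1)))) y := by
  have h1 : HasDerivAt (fun z : ℝ => z ^ α) (α * y ^ (α - 1)) y :=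
    Real.hasDerivAt_rpow_const (Or.inl hy0.ne')
  have h2 : HasDerivAt (fun z : ℝ => 1 + 2 ^ α * z ^ α) (2 ^ α * (α * y ^ (α - 1))) y :=
    (h1.const_mul _).const_add 1
  have h3 : HasDerivAt (fun z : ℝ => z * (1 + 2 ^ α * z ^ α))
      (1 * (1 + 2 ^ α * y ^ α) + y * (2 ^ α * (α * y ^ (α - 1)))) y :=
    (hasDerivAt_id y).mul h2
  refine h3.congr_of_eventuallyEq ?_
  filter_upwards [Iio_mem_nhds hy] with z hz
  simp only [T, f1]
  rw [if_pos (show z < 1/2 from hz)]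

lemma hasDerivAt_T_right (hβ : 1 ≤ β) {x : ℝ} (hx : 1/2 < x) :
    HasDerivAt (T α β) (2 ^ β * (β * (x - 1/2) ^ (β - 1))) x := by
  have h1 : HasDerivAt (fun z : ℝ => z - 1/2) 1 x := (hasDerivAt_id x).sub_const _
  have h2 : HasDerivAt (fun z : ℝ => (z - 1/2) ^ β)
      (β * (x - 1/2) ^ (β - 1) * 1) x := by
    have h := (Real.hasDerivAt_rpow_const (x := x - 1/2) (p := β) (Or.inl (sub_pos.2 hx).ne')).comp x h1
    exact h
  have h3 : HasDerivAt (fun z : ℝ => 2 ^ β * (z - 1/2) ^ β)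
      (2 ^ β * (β * (x - 1/2) ^ (β - 1))) x := by
    simpa [mul_assoc] using h2.const_mul ((2:ℝ) ^ β)
  refine h3.congr_of_eventuallyEq ?_
  filter_upwards [Ioi_mem_nhds hx] with z hz
  simp only [T, f2]
  rw [if_neg (not_lt.2 (le_of_lt (show (1:ℝ)/2 < z from hz)))]

lemma f1_div_self (hα : 0 < α) {y : ℝ} (hy : 0 < y) :
    f1 α y / y = 1 + 2 ^ α * y ^ α := by
  unfold f1
  rw [mul_comm, mul_div_assoc, div_self hy.ne', mul_one]

lemma deriv_ge (hα : 0 < α) {y : ℝ} (hy : 0 < y) :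
    1 + 2 ^ α * y ^ α ≤ 1 * (1 + 2 ^ α * y ^ α) + y * (2 ^ α * (α * y ^ (α - 1))) := by
  have h : (0:ℝ) ≤ y * (2 ^ α * (α * y ^ (α - 1))) := by
    have := Real.rpow_nonneg hy.le (α - 1)
    positivity
  linarith

lemma keyQ (hα : 0 < α) {b : ℕ → ℝ} (hb : IsB α b) :
    ∀ m : ℕ, ∀ y : ℝ, b (m+1) < y → y < b m →
      ∃ D : ℝ, HasDerivAt ((T α β)^[m+1]) D y ∧ (f1 α)^[m+1] y / y ≤ D := by
  intro m
  induction m with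
  | zero =>
    intro y hyl hyu
    have hy0 : 0 < y := (b_pos hα hb 1).trans hyl
    have hyh : y < 1/2 := by rw [← hb.1]; exact hyu
    refine ⟨1 * (1 + 2 ^ α * y ^ α) + y * (2 ^ α * (α * y ^ (α - 1))), ?_, ?_⟩
    · rw [Function.iterate_one]
      exact hasDerivAt_T_left hα hy0 hyh
    · rw [Function.iterate_one, f1_div_self hα hy0]
      exact deriv_ge hα hy0
  | succ m ih =>
    intro y hyl hyu
    have hy0 : 0 < y := (b_pos hα hb (m+2)).trans hyl
    have hyh : y < 1/2 := lt_of_lt_of_le hyu (b_le_half hb (m+1))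
    have hfy_l : b (m+1) < f1 α y := by
      rw [← (hb.2 (m+1)).2]
      exact f1_mono hα (b_pos hα hb (m+2)).le hyl
    have hfy_u : f1 α y < b m := by
      rw [← (hb.2 m).2]
      exact f1_mono hα hy0.le hyu
    obtain ⟨D', hD', hge⟩ := ih (f1 α y) hfy_l hfy_u
    have hTy : T α β y = f1 α y := if_pos hyh
    rw [← hTy] at hD'
    have hT : HasDerivAt (T α β)
        (1 * (1 + 2 ^ α * y ^ α) + y * (2 ^ α * (α * y ^ (α - 1)))) y :=
      hasDerivAt_T_left hα hy0 hyh
    have hcomp := hD'.comp y hT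
    refine ⟨D' * (1 * (1 + 2 ^ α * y ^ α) + y * (2 ^ α * (α * y ^ (α - 1)))), ?_, ?_⟩
    · rw [Function.iterate_succ (T α β) (m+1)]
      exact hcomp
    · -- the inequality
      set d : ℝ := 1 * (1 + 2 ^ α * y ^ α) + y * (2 ^ α * (α * y ^ (α - 1))) with hd
      have hfy0 : 0 < f1 α y := f1_pos hα hy0
      have hA0 : 0 < (f1 α)^[m+1] (f1 α y) := f1_iter_pos hα (m+1) hfy0
      have hdge : f1 α y / y ≤ d := by
        rw [f1_div_self hα hy0]; exact deriv_ge hα hy0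
      have hD'0 : 0 ≤ D' := le_trans (by positivity) hge
      have hsplit : (f1 α)^[m+2] y / y
          = ((f1 α)^[m+1] (f1 α y) / f1 α y) * (f1 α y / y) := by
        rw [Function.iterate_succ_apply]
        field_simp
      rw [hsplit]
      exact mul_le_mul hge hdge (by positivity) hD'0

lemma two_le_beta_rpow (hβ : 1 ≤ β) : (2:ℝ) ≤ β * 2 ^ (1/β) := by
  have hβ0 : (0:ℝ) < β := lt_of_lt_of_le one_pos hβ
  have h1 : Real.log (1/β) ≤ 1/β - 1 := Real.log_le_sub_one_of_pos (by positivity)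
  have hlogβ : 1 - 1/β ≤ Real.log β := by
    rw [one_div, Real.log_inv] at h1
    rw [one_div]
    linarith
  have hlog2 : Real.log 2 ≤ 1 := by
    have := Real.log_le_sub_one_of_pos (two_pos (α := ℝ))
    linarith
  have h0 : 0 ≤ 1 - 1/β := by
    have : 1/β ≤ 1 := by rw [div_le_one hβ0]; exact hβ
    linarith
  have hexp : (1 - 1/β) * Real.log 2 ≤ Real.log β :=
    le_trans (by nlinarith) hlogβ
  have key : (2:ℝ) ^ (1 - 1/β) ≤ β := by
    rw [Real.rpow_def_of_pos two_pos]
    calc Real.exp (Real.log 2 * (1 - 1/β)) ≤ Real.exp (Real.log β) := by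
          apply Real.exp_le_exp.2; nlinarith
      _ = β := Real.exp_log hβ0
  calc (2:ℝ) = 2 ^ ((1 - 1/β) + 1/β) := by
        rw [sub_add_cancel, Real.rpow_one]
    _ = 2 ^ (1 - 1/β) * 2 ^ (1/β) := Real.rpow_add two_pos _ _
    _ ≤ β * 2 ^ (1/β) := mul_le_mul_of_nonneg_right key rpow2_pos.le

lemma f2_eval (hβ0 : 0 < β) {t : ℝ} (ht : 0 ≤ t) :
    (2:ℝ) ^ β * ((1/2) * t ^ (1/β)) ^ β = t := by
  have h1 : ((1/2:ℝ) * t ^ (1/β)) ^ β = (1/2:ℝ) ^ β * (t ^ (1/β)) ^ β :=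
    Real.mul_rpow (by norm_num) (Real.rpow_nonneg ht _)
  have h2 : ((t:ℝ) ^ (1/β)) ^ β = t := by
    rw [← Real.rpow_mul ht, one_div, inv_mul_cancel₀ hβ0.ne', Real.rpow_one]
  have h3 : (2:ℝ) ^ β * (1/2:ℝ) ^ β = 1 := by
    rw [← Real.mul_rpow (by norm_num) (by norm_num)]
    norm_num [Real.one_rpow]
  rw [h1, ← mul_assoc, h3, one_mul, h2]

lemma half_pow (hβ0 : 0 < β) :
    (1/2:ℝ) * (1/2:ℝ) ^ (1/β) = 2 ^ (-(1+1/β)) := by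
  have h : ((1/2:ℝ)) = 2 ^ (-1:ℝ) := by rw [Real.rpow_neg_one]; norm_num
  rw [h, ← Real.rpow_mul (by norm_num : (0:ℝ) ≤ 2), ← Real.rpow_add two_pos]
  congr 1
  ring

lemma pow_combine (hβ0 : 0 < β) :
    (2:ℝ) ^ β * ((2:ℝ) ^ (-(1+1/β))) ^ (β-1) = 2 ^ (1/β) := by
  rw [← Real.rpow_mul (by norm_num : (0:ℝ) ≤ 2), ← Real.rpow_add two_pos]
  congr 1
  field_simp
  ring

lemma hval_lemma {w : ℝ} (hw : 0 < w) :
    (1/2) / ((2:ℝ) ^ β * w ^ β) * (2 ^ β * (β * w ^ (β-1))) = β / (2 * w) := by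
  rw [Real.rpow_sub hw, Real.rpow_one]
  have h1 : (0:ℝ) < 2 ^ β := rpow2_pos
  have h2 : (0:ℝ) < w ^ β := Real.rpow_pos_of_pos hw β
  field_simp

lemma two_mul_pow (hβ0 : 0 < β) :
    (2:ℝ) * 2 ^ (-(1+1/β)) * 2 ^ (1/β) = 1 := by
  calc (2:ℝ) * 2 ^ (-(1+1/β)) * 2 ^ (1/β)
      = 2 ^ (1:ℝ) * 2 ^ (-(1+1/β)) * 2 ^ (1/β) := by rw [Real.rpow_one]
    _ = 2 ^ ((1:ℝ) + (-(1+1/β)) + 1/β) := by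
        rw [← Real.rpow_add two_pos, ← Real.rpow_add two_pos]
    _ = 2 ^ (0:ℝ) := by norm_num
    _ = 1 := Real.rpow_zero 2

end Auxiliary


/-- the first return map to `Y = [1/2,1]` is uniformly expanding:
for every `γ ∈ 𝔇`, `n ≥ 0` and `x ∈ (ĥb_{n+1}, ĥb_n)`, `(T_γ^{n+1})'(x) > 3/2`. -/
theorem stmt3 (α β : ℝ) (hγ : Dom α β)
    (b bh : ℕ → ℝ) (hb : IsB α b) (hbh : IsBh β b bh) :
    ∀ n : ℕ, ∀ x ∈ Ioo (bh (n+1)) (bh n),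
      (3/2 : ℝ) < deriv ((T α β)^[n+1]) x := by
  obtain ⟨hα, hα1, hβ, hαβ⟩ := hγ
  have hβ0 : (0:ℝ) < β := lt_of_lt_of_le one_pos hβ
  intro n x hx
  obtain ⟨hxl, hxr⟩ := hx
  have hbh1 : bh (n+1) = 1/2 + (1/2) * (b n) ^ (1/β) := hbh.2 n
  have hbn0 : 0 < b n := b_pos hα hb n
  have hwl : (1/2) * (b n) ^ (1/β) < x - 1/2 := by
    rw [hbh1] at hxl; linarith
  have hwl0 : (0:ℝ) < (1/2) * (b n) ^ (1/β) := by
    have := Real.rpow_pos_of_pos hbn0 (1/β); linarith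
  have hw0 : (0:ℝ) < x - 1/2 := hwl0.trans hwl
  have hxhalf : 1/2 < x := by linarith
  have hT : HasDerivAt (T α β) (2 ^ β * (β * (x - 1/2) ^ (β-1))) x :=
    hasDerivAt_T_right hβ hxhalf
  have h2β : (2:ℝ) ≤ β * 2 ^ (1/β) := two_le_beta_rpow hβ
  cases n with
  | zero =>
    simp only [zero_add, Function.iterate_one]
    rw [hT.deriv]
    have hLw : (2:ℝ) ^ (-(1+1/β)) < x - 1/2 := by
      rw [← half_pow hβ0]
      rw [hb.1] at hwl
      exact hwl
    have hpow : ((2:ℝ) ^ (-(1+1/β))) ^ (β-1) ≤ (x - 1/2) ^ (β-1) :=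
      Real.rpow_le_rpow rpow2_pos.le hLw.le (by linarith)
    have h1 : β * 2 ^ (1/β) ≤ 2 ^ β * (β * (x - 1/2) ^ (β-1)) := by
      calc β * 2 ^ (1/β)
          = β * (2 ^ β * ((2:ℝ) ^ (-(1+1/β))) ^ (β-1)) := by rw [pow_combine hβ0]
        _ ≤ β * (2 ^ β * (x - 1/2) ^ (β-1)) := by
            refine mul_le_mul_of_nonneg_left ?_ hβ0.le
            exact mul_le_mul_of_nonneg_left hpow rpow2_pos.le
        _ = 2 ^ β * (β * (x - 1/2) ^ (β-1)) := by ring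
    linarith
  | succ m =>
    set y : ℝ := 2 ^ β * (x - 1/2) ^ β with hy
    have hy0 : (0:ℝ) < y := by
      have := Real.rpow_pos_of_pos hw0 β
      positivity
    have hTx : T α β x = y := by
      simp only [T, f2, if_neg (not_lt.2 hxhalf.le), hy]
    have hbm0 : 0 < b m := b_pos hα hb m
    have hyl : b (m+1) < y := by
      calc b (m+1) = 2 ^ β * ((1/2) * (b (m+1)) ^ (1/β)) ^ β :=
            (f2_eval hβ0 hbn0.le).symm
        _ < y := by
            rw [hy]
            refine mul_lt_mul_of_pos_left ?_ rpow2_pos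
            exact Real.rpow_lt_rpow hwl0.le hwl hβ0
    have hwu : x - 1/2 < (1/2) * (b m) ^ (1/β) := by
      have := hbh.2 m
      rw [this] at hxr
      linarith
    have hyu : y < b m := by
      calc y < 2 ^ β * ((1/2) * (b m) ^ (1/β)) ^ β := by
            rw [hy]
            refine mul_lt_mul_of_pos_left ?_ rpow2_pos
            exact Real.rpow_lt_rpow hw0.le hwu hβ0
        _ = b m := f2_eval hβ0 hbm0.le
    obtain ⟨D', hD', hge⟩ := keyQ (β := β) hα hb m y hyl hyu
    rw [← hTx] at hD'
    have hcomp := hD'.comp x hT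
    rw [Function.iterate_succ (T α β) (m+1), hcomp.deriv]
    -- lower bounds
    have hiter : (1:ℝ)/2 < (f1 α)^[m+1] y := by
      have h := f1_iter_mono hα (m+1) (b_pos hα hb (m+1)).le hyl
      rwa [iter_b hα hb (m+1)] at h
    have hD2pos : (0:ℝ) < 2 ^ β * (β * (x - 1/2) ^ (β-1)) := by
      have := Real.rpow_pos_of_pos hw0 (β-1)
      positivity
    have step1 : (1/2) / y * (2 ^ β * (β * (x - 1/2) ^ (β-1)))
        < (f1 α)^[m+1] y / y * (2 ^ β * (β * (x - 1/2) ^ (β-1))) := by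
      refine mul_lt_mul_of_pos_right ?_ hD2pos
      exact (div_lt_div_iff_of_pos_right hy0).2 hiter
    have step2 : (f1 α)^[m+1] y / y * (2 ^ β * (β * (x - 1/2) ^ (β-1)))
        ≤ D' * (2 ^ β * (β * (x - 1/2) ^ (β-1))) :=
      mul_le_mul_of_nonneg_right hge hD2pos.le
    have hval : (1/2) / y * (2 ^ β * (β * (x - 1/2) ^ (β-1)))
        = β / (2 * (x - 1/2)) := by
      rw [hy]
      exact hval_lemma hw0
    have hwL : x - 1/2 ≤ 2 ^ (-(1+1/β)) := by
      have h1 : (b m) ^ (1/β) ≤ (1/2:ℝ) ^ (1/β) :=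
        Real.rpow_le_rpow hbm0.le (b_le_half hb m) (by positivity)
      have h2 : (1/2:ℝ) * (b m) ^ (1/β) ≤ (1/2:ℝ) * (1/2:ℝ) ^ (1/β) := by linarith
      rw [half_pow hβ0] at h2
      linarith
    have hfinal : (2:ℝ) ≤ β / (2 * (x - 1/2)) := by
      rw [le_div_iff₀ (by linarith : (0:ℝ) < 2 * (x - 1/2))]
      have hA : 2 * (x - 1/2) * 2 ^ (1/β) ≤ 1 := by
        calc 2 * (x - 1/2) * 2 ^ (1/β) ≤ 2 * 2 ^ (-(1+1/β)) * 2 ^ (1/β) := by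
              refine mul_le_mul_of_nonneg_right ?_ (rpow2_pos (a := 1/β)).le
              linarith
          _ = 1 := two_mul_pow hβ0
      calc (2:ℝ) * (2 * (x - 1/2)) ≤ β * 2 ^ (1/β) * (2 * (x - 1/2)) :=
            mul_le_mul_of_nonneg_right h2β (by linarith)
        _ = β * (2 * (x - 1/2) * 2 ^ (1/β)) := by ring
        _ ≤ β * 1 := mul_le_mul_of_nonneg_left hA hβ0.le
        _ = β := mul_one β
    linarith


end
end

section
/- If b₁ ≥ 1, b₂ ≥ 12·b₁ and b₃ ≥ 103·b₂, then for every γ=(α,β)∈𝔇 (in particular for every β≥1), the operator N_{γ,2} maps the cone C^{(3)}_{b₁,b₂,b₃} into itself: N_{γ,2}(C^{(3)}_{b₁,b₂,b₃}) ⊆ C^{(3)}_{b₁,b₂,b₃}. -/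
open MeasureTheory Real Set Filter
open Topology

noncomputable section

/-- The cone `C^{(3)}_{b₁,b₂,b₃}` involving higher order derivatives. -/
def Cone3 (b1 b2 b3 : ℝ) (φ : ℝ → ℝ) : Prop :=
  ContDiffOn ℝ 3 φ (Ioc (0:ℝ) 1) ∧
  (∀ x ∈ Ioc (0:ℝ) 1, 0 ≤ φ x) ∧
  (∀ x ∈ Ioc (0:ℝ) 1, |deriv φ x| ≤ b1 / x * φ x) ∧
  (∀ x ∈ Ioc (0:ℝ) 1, |deriv (deriv φ) x| ≤ b2 / x ^ 2 * φ x) ∧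
  (∀ x ∈ Ioc (0:ℝ) 1, |deriv (deriv (deriv φ)) x| ≤ b3 / x ^ 3 * φ x)

namespace Stmt8Aux

def gg (c x : ℝ) : ℝ := (x ^ c + 1) / 2
def A0 (c x : ℝ) : ℝ := c / 2 * x ^ (c - 1)
def A1 (c x : ℝ) : ℝ := c / 2 * (c - 1) * x ^ (c - 2)
def A2 (c x : ℝ) : ℝ := c / 2 * (c - 1) * (c - 2) * x ^ (c - 3)
def A3 (c x : ℝ) : ℝ := c / 2 * (c - 1) * (c - 2) * (c - 3) * x ^ (c - 4)

lemma hasDerivAt_gg (c : ℝ) {x : ℝ} (hx : 0 < x) : HasDerivAt (gg c) (A0 c x) x := by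
  have h := ((Real.hasDerivAt_rpow_const (p := c) (Or.inl hx.ne')).add_const 1).div_const 2
  have hv : A0 c x = c * x ^ (c - 1) / 2 := by unfold A0; ring
  rw [hv]; exact h

lemma hasDerivAt_A0 (c : ℝ) {x : ℝ} (hx : 0 < x) : HasDerivAt (A0 c) (A1 c x) x := by
  have h := (Real.hasDerivAt_rpow_const (p := c - 1) (Or.inl hx.ne')).const_mul (c / 2)
  rw [show c - 1 - 1 = c - 2 from by ring] at h
  have hv : A1 c x = c / 2 * ((c - 1) * x ^ (c - 2)) := by unfold A1; ring
  rw [hv]; exact h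

lemma hasDerivAt_A1 (c : ℝ) {x : ℝ} (hx : 0 < x) : HasDerivAt (A1 c) (A2 c x) x := by
  have h := (Real.hasDerivAt_rpow_const (p := c - 2) (Or.inl hx.ne')).const_mul (c / 2 * (c - 1))
  rw [show c - 2 - 1 = c - 3 from by ring] at h
  have hv : A2 c x = c / 2 * (c - 1) * ((c - 2) * x ^ (c - 3)) := by unfold A2; ring
  rw [hv]; exact h

lemma hasDerivAt_A2 (c : ℝ) {x : ℝ} (hx : 0 < x) : HasDerivAt (A2 c) (A3 c x) x := by
  have h := (Real.hasDerivAt_rpow_const (p := c - 3) (Or.inl hx.ne')).const_mul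
    (c / 2 * (c - 1) * (c - 2))
  rw [show c - 3 - 1 = c - 4 from by ring] at h
  have hv : A3 c x = c / 2 * (c - 1) * (c - 2) * ((c - 3) * x ^ (c - 4)) := by unfold A3; ring
  rw [hv]; exact h

def Psi (c : ℝ) (φ : ℝ → ℝ) (x : ℝ) : ℝ := A0 c x * φ (gg c x)

def FF1 (c : ℝ) (φ p1 : ℝ → ℝ) (x : ℝ) : ℝ :=
  A1 c x * φ (gg c x) + (A0 c x) ^ 2 * p1 (gg c x)

def FF2 (c : ℝ) (φ p1 p2 : ℝ → ℝ) (x : ℝ) : ℝ :=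
  A2 c x * φ (gg c x) + 3 * A0 c x * A1 c x * p1 (gg c x) + (A0 c x) ^ 3 * p2 (gg c x)

def FF3 (c : ℝ) (φ p1 p2 p3 : ℝ → ℝ) (x : ℝ) : ℝ :=
  A3 c x * φ (gg c x) + (4 * A0 c x * A2 c x + 3 * (A1 c x) ^ 2) * p1 (gg c x) +
    6 * (A0 c x) ^ 2 * A1 c x * p2 (gg c x) + (A0 c x) ^ 4 * p3 (gg c x)

/-- Dichotomy lemma at the endpoint 1. -/
lemma derivA {u G : ℝ → ℝ} {d : ℝ}
    (hG : HasDerivWithinAt G d (Ioc (0:ℝ) 1) 1)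
    (heq : ∀ x ∈ Ioo (0:ℝ) 1, u x = G x)
    (hu1 : u 1 = G 1 ∨ u 1 = 0) :
    deriv u 1 = 0 ∨ (u 1 = G 1 ∧ deriv u 1 = d) := by
  by_cases hd : DifferentiableAt ℝ u 1
  · have hl : (𝓝[Ioo (0:ℝ) 1] 1).NeBot := by
      rw [← mem_closure_iff_nhdsWithin_neBot, closure_Ioo (by norm_num : (0:ℝ) ≠ 1)]
      exact ⟨by norm_num, le_rfl⟩
    have huG : u 1 = G 1 := by
      rcases hu1 with h | h
      · exact h
      · have t1 : Tendsto u (𝓝[Ioo (0:ℝ) 1] 1) (𝓝 (u 1)) :=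
          (hd.continuousAt.continuousWithinAt).tendsto
        have t1' : Tendsto G (𝓝[Ioo (0:ℝ) 1] 1) (𝓝 (u 1)) := by
          refine t1.congr' ?_
          filter_upwards [self_mem_nhdsWithin] with z hz
          exact heq z hz
        have t2 : Tendsto G (𝓝[Ioo (0:ℝ) 1] 1) (𝓝 (G 1)) :=
          hG.continuousWithinAt.tendsto.mono_left (nhdsWithin_mono _ Ioo_subset_Ioc_self)
        exact tendsto_nhds_unique t1' t2
    have hev : ∀ x ∈ Ioc (0:ℝ) 1, u x = G x := by
      intro x hx
      rcases eq_or_lt_of_le hx.2 with h | h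
      · rw [h]; exact huG
      · exact heq x ⟨hx.1, h⟩
    have hud : UniqueDiffWithinAt ℝ (Ioc (0:ℝ) 1) 1 :=
      (uniqueDiffOn_Ioc 0 1) 1 (by norm_num)
    have h1 : HasDerivWithinAt u d (Ioc (0:ℝ) 1) 1 := hG.congr hev huG
    have h2 : HasDerivWithinAt u (deriv u 1) (Ioc (0:ℝ) 1) 1 :=
      hd.hasDerivAt.hasDerivWithinAt
    right
    exact ⟨huG, by rw [← h2.derivWithin hud, h1.derivWithin hud]⟩
  · exact Or.inl (deriv_zero_of_not_differentiableAt hd)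

/-- Core inequality 1. -/
lemma core1 {b1 c u : ℝ} (h1 : 1 ≤ b1) (hc0 : 0 < c) (hc1 : c ≤ 1)
    (hu0 : 0 < u) (hu1 : u ≤ 1) : (1 - c) + c * b1 * u ≤ b1 := by
  nlinarith [mul_nonneg (sub_nonneg.2 hc1) (sub_nonneg.2 h1),
    mul_nonneg (mul_nonneg hc0.le (by linarith : (0:ℝ) ≤ b1)) (sub_nonneg.2 hu1)]

/-- Core inequality 2. -/
lemma core2 {b1 b2 c u : ℝ} (h1 : 1 ≤ b1) (h2 : 12 * b1 ≤ b2) (hc0 : 0 < c) (hc1 : c ≤ 1)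
    (hu0 : 0 < u) (hu1 : u ≤ 1) :
    (1 - c) * (2 - c) + 3 * c * (1 - c) * b1 * u + c ^ 2 * b2 * u ^ 2 ≤ b2 := by
  have hb1 : (0:ℝ) ≤ b1 := by linarith
  have hb2 : (0:ℝ) ≤ b2 := by linarith
  have hq : (0:ℝ) ≤ 1 - c := by linarith
  have t1 : 3 * c * (1 - c) * b1 * u ≤ 3 * c * (1 - c) * b1 := by
    nlinarith [mul_nonneg (mul_nonneg (mul_nonneg (by linarith : (0:ℝ) ≤ 3 * c) hq) hb1)
      (sub_nonneg.2 hu1)]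
  have t2 : c ^ 2 * b2 * u ^ 2 ≤ c ^ 2 * b2 := by
    nlinarith [mul_nonneg (mul_nonneg (sq_nonneg c) hb2) (mul_nonneg hu0.le (sub_nonneg.2 hu1)),
      mul_nonneg (mul_nonneg (sq_nonneg c) hb2) (sub_nonneg.2 hu1)]
  have t3 : (1 - c) * (2 - c) + 3 * c * (1 - c) * b1 + c ^ 2 * b2 ≤ b2 := by
    nlinarith [mul_nonneg hq (sub_nonneg.2 h1), mul_nonneg (mul_nonneg hq hc0.le) hb1,
      mul_nonneg (mul_nonneg hq hc0.le) (sub_nonneg.2 h1),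
      mul_nonneg (mul_nonneg hq (by linarith : (0:ℝ) ≤ c + 7/12)) hb2]
  linarith

set_option maxHeartbeats 1000000 in
/-- Core inequality 3. -/
lemma core3 {b1 b2 b3 c u : ℝ} (h1 : 1 ≤ b1) (h2 : 12 * b1 ≤ b2) (h3 : 103 * b2 ≤ b3)
    (hc0 : 0 < c) (hc1 : c ≤ 1) (hu0 : 0 < u) (hu1 : u ≤ 1) :
    (1 - c) * (2 - c) * (3 - c) + c * (1 - c) * (11 - 7 * c) * b1 * u +
      6 * c ^ 2 * (1 - c) * b2 * u ^ 2 + c ^ 3 * b3 * u ^ 3 ≤ b3 := by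
  have hb1 : (0:ℝ) ≤ b1 := by linarith
  have hb2 : (0:ℝ) ≤ b2 := by linarith
  have hb3 : (0:ℝ) ≤ b3 := by linarith
  have hq : (0:ℝ) ≤ 1 - c := by linarith
  have hcoef : (0:ℝ) ≤ c * (1 - c) * (11 - 7 * c) * b1 := by
    have : (0:ℝ) ≤ 11 - 7 * c := by linarith
    positivity
  have t1 : c * (1 - c) * (11 - 7 * c) * b1 * u ≤ c * (1 - c) * (11 - 7 * c) * b1 := by
    nlinarith [mul_nonneg hcoef (sub_nonneg.2 hu1)]
  have t2 : 6 * c ^ 2 * (1 - c) * b2 * u ^ 2 ≤ 6 * c ^ 2 * (1 - c) * b2 := by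
    have hco : (0:ℝ) ≤ 6 * c ^ 2 * (1 - c) * b2 := by positivity
    nlinarith [mul_nonneg hco (sub_nonneg.2 (show u ^ 2 ≤ 1 by nlinarith))]
  have t3 : c ^ 3 * b3 * u ^ 3 ≤ c ^ 3 * b3 := by
    have hco : (0:ℝ) ≤ c ^ 3 * b3 := by positivity
    nlinarith [mul_nonneg hco (sub_nonneg.2 (show u ^ 3 ≤ 1 by nlinarith))]
  -- main estimate with u = 1
  have k1 : c * (11 - 7 * c) ≤ 5 := by nlinarith [sq_nonneg (c - 11/14)]
  have k2 : (1 - c) * (2 - c) * (3 - c) ≤ 6 * (1 - c) * b1 := by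
    nlinarith [mul_nonneg (mul_nonneg hq hc0.le) (show (0:ℝ) ≤ 5 - c by linarith),
      mul_nonneg (mul_nonneg hq (by norm_num : (0:ℝ) ≤ 6)) (sub_nonneg.2 h1)]
  have k3 : c * (1 - c) * (11 - 7 * c) * b1 ≤ 5 * (1 - c) * b1 := by
    nlinarith [mul_nonneg (mul_nonneg hq hb1) (sub_nonneg.2 k1)]
  have k4 : 6 * (1 - c) * b1 ≤ (1/2) * (1 - c) * b2 := by
    nlinarith [mul_nonneg hq (by linarith : (0:ℝ) ≤ b2 - 12 * b1)]
  have k5 : 5 * (1 - c) * b1 ≤ (5/12) * (1 - c) * b2 := by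
    nlinarith [mul_nonneg hq (by linarith : (0:ℝ) ≤ b2 - 12 * b1)]
  have k6 : 6 * c ^ 2 * (1 - c) * b2 ≤ 6 * (1 - c) * b2 := by
    nlinarith [mul_nonneg (mul_nonneg hq hb2) (sub_nonneg.2 (show c ^ 2 ≤ 1 by nlinarith))]
  have k7 : (83/12) * (1 - c) * b2 ≤ (83/1236) * (1 - c) * b3 := by
    nlinarith [mul_nonneg hq (by linarith : (0:ℝ) ≤ b3 - 103 * b2)]
  have k8 : (83/1236) * (1 - c) * b3 + c ^ 3 * b3 ≤ b3 := by
    nlinarith [mul_nonneg (mul_nonneg hq hb3)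
      (show (0:ℝ) ≤ 1153/1236 + c + c ^ 2 by positivity)]
  linarith


lemma E1lem {x : ℝ} (hx : 0 < x) (c : ℝ) : x ^ (c - 1) = x ^ c / x := by
  rw [Real.rpow_sub hx, Real.rpow_one]

lemma E2lem {x : ℝ} (hx : 0 < x) (c : ℝ) : x ^ (c - 2) = x ^ c / x ^ 2 := by
  rw [show c - 2 = c - ((2:ℕ):ℝ) by norm_num, Real.rpow_sub hx, Real.rpow_natCast]

lemma E3lem {x : ℝ} (hx : 0 < x) (c : ℝ) : x ^ (c - 3) = x ^ c / x ^ 3 := by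
  rw [show c - 3 = c - ((3:ℕ):ℝ) by norm_num, Real.rpow_sub hx, Real.rpow_natCast]

lemma E4lem {x : ℝ} (hx : 0 < x) (c : ℝ) : x ^ (c - 4) = x ^ c / x ^ 4 := by
  rw [show c - 4 = c - ((4:ℕ):ℝ) by norm_num, Real.rpow_sub hx, Real.rpow_natCast]

end Stmt8Aux

open Stmt8Aux
set_option maxHeartbeats 2000000 in
/-- if `b₁ ≥ 1`, `b₂ ≥ 12 b₁`, `b₃ ≥ 103 b₂`, then `N_{γ,2}`
preserves the cone `C^{(3)}_{b₁,b₂,b₃}` for every `γ ∈ 𝔇`. -/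
theorem stmt8 (b1 b2 b3 : ℝ) (h1 : 1 ≤ b1) (h2 : 12 * b1 ≤ b2) (h3 : 103 * b2 ≤ b3)
    (α β : ℝ) (hγ : Dom α β)
    (φ : ℝ → ℝ) (hφ : Cone3 b1 b2 b3 φ) :
    Cone3 b1 b2 b3 (N2 β φ) := by
  obtain ⟨hφc, hφ0, hφb1, hφb2, hφb3⟩ := hφ
  obtain ⟨hα0, hα1, hβ1, hαβ⟩ := hγ
  have hβ0 : (0:ℝ) < β := lt_of_lt_of_le one_pos hβ1
  set c : ℝ := 1 / β with hcdef
  have hc0 : 0 < c := by positivity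
  have hc1 : c ≤ 1 := by rw [hcdef, div_le_one hβ0]; exact hβ1
  have hb1' : (0:ℝ) ≤ b1 := by linarith
  have hb2' : (0:ℝ) ≤ b2 := by linarith
  have hb3' : (0:ℝ) ≤ b3 := by linarith
  have hs : UniqueDiffOn ℝ (Ioc (0:ℝ) 1) := uniqueDiffOn_Ioc 0 1
  have h1s : (1:ℝ) ∈ Ioc (0:ℝ) 1 := by norm_num
  -- basic facts about gg
  have hgmem : ∀ x ∈ Ioc (0:ℝ) 1, gg c x ∈ Ioc (0:ℝ) 1 ∧ 1/2 ≤ gg c x := by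
    intro x hx
    have hxc0 : 0 < x ^ c := Real.rpow_pos_of_pos hx.1 c
    have hxc1 : x ^ c ≤ 1 := Real.rpow_le_one hx.1.le hx.2 hc0.le
    refine ⟨⟨?_, ?_⟩, ?_⟩ <;> (unfold Stmt8Aux.gg) <;> [linarith; linarith; linarith]
  have hmaps : MapsTo (gg c) (Ioc (0:ℝ) 1) (Ioc (0:ℝ) 1) := fun x hx => (hgmem x hx).1
  -- the within-jet of φ
  set p1 := derivWithin φ (Ioc (0:ℝ) 1) with hp1def
  set p2 := derivWithin p1 (Ioc (0:ℝ) 1) with hp2def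
  set p3 := derivWithin p2 (Ioc (0:ℝ) 1) with hp3def
  have hp1c : ContDiffOn ℝ 2 p1 (Ioc (0:ℝ) 1) := hφc.derivWithin hs (by norm_num)
  have hp2c : ContDiffOn ℝ 1 p2 (Ioc (0:ℝ) 1) := hp1c.derivWithin hs (by norm_num)
  have hp3c : ContDiffOn ℝ 0 p3 (Ioc (0:ℝ) 1) := hp2c.derivWithin hs (by norm_num)
  have hp3cont : ContinuousOn p3 (Ioc (0:ℝ) 1) := hp3c.continuousOn
  have hφd : ∀ y ∈ Ioc (0:ℝ) 1, HasDerivWithinAt φ (p1 y) (Ioc (0:ℝ) 1) y :=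
    fun y hy => (hφc.differentiableOn (by norm_num) y hy).hasDerivWithinAt
  have hp1d : ∀ y ∈ Ioc (0:ℝ) 1, HasDerivWithinAt p1 (p2 y) (Ioc (0:ℝ) 1) y :=
    fun y hy => (hp1c.differentiableOn (by norm_num) y hy).hasDerivWithinAt
  have hp2d : ∀ y ∈ Ioc (0:ℝ) 1, HasDerivWithinAt p2 (p3 y) (Ioc (0:ℝ) 1) y :=
    fun y hy => (hp2c.differentiableOn (by norm_num) y hy).hasDerivWithinAt
  -- interior identifications
  have hIoo : ∀ y ∈ Ioo (0:ℝ) 1, Ioc (0:ℝ) 1 ∈ 𝓝 y := fun y hy => Ioc_mem_nhds hy.1 hy.2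
  have hp1eq : ∀ y ∈ Ioo (0:ℝ) 1, p1 y = deriv φ y :=
    fun y hy => derivWithin_of_mem_nhds (hIoo y hy)
  have hp2eq : ∀ y ∈ Ioo (0:ℝ) 1, p2 y = deriv (deriv φ) y := by
    intro y hy
    have hev : p1 =ᶠ[𝓝 y] deriv φ := by
      filter_upwards [isOpen_Ioo.mem_nhds hy] with z hz; exact hp1eq z hz
    rw [hp2def, derivWithin_of_mem_nhds (hIoo y hy), hev.deriv_eq]
  have hp3eq : ∀ y ∈ Ioo (0:ℝ) 1, p3 y = deriv (deriv (deriv φ)) y := by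
    intro y hy
    have hev : p2 =ᶠ[𝓝 y] deriv (deriv φ) := by
      filter_upwards [isOpen_Ioo.mem_nhds hy] with z hz; exact hp2eq z hz
    rw [hp3def, derivWithin_of_mem_nhds (hIoo y hy), hev.deriv_eq]
  -- limit lemma to extend interior bounds to 1
  have hlne : (𝓝[Ioo (0:ℝ) 1] 1).NeBot := by
    rw [← mem_closure_iff_nhdsWithin_neBot, closure_Ioo (by norm_num : (0:ℝ) ≠ 1)]
    exact ⟨by norm_num, le_rfl⟩
  have limlem : ∀ F W : ℝ → ℝ, ContinuousWithinAt F (Ioc (0:ℝ) 1) 1 →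
      ContinuousWithinAt W (Ioc (0:ℝ) 1) 1 →
      (∀ y ∈ Ioo (0:ℝ) 1, |F y| ≤ W y) → |F 1| ≤ W 1 := by
    intro F W hF hW hb
    have tF : Tendsto (fun y => |F y|) (𝓝[Ioo (0:ℝ) 1] 1) (𝓝 |F 1|) :=
      (hF.tendsto.mono_left (nhdsWithin_mono _ Ioo_subset_Ioc_self)).abs
    have tW : Tendsto W (𝓝[Ioo (0:ℝ) 1] 1) (𝓝 (W 1)) :=
      hW.tendsto.mono_left (nhdsWithin_mono _ Ioo_subset_Ioc_self)
    refine le_of_tendsto_of_tendsto tF tW ?_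
    filter_upwards [self_mem_nhdsWithin] with y hy
    exact hb y hy
  have hφcont : ContinuousWithinAt φ (Ioc (0:ℝ) 1) 1 := hφc.continuousOn 1 h1s
  -- bounds on the within-jet, on all of Ioc 0 1
  have B1 : ∀ y ∈ Ioc (0:ℝ) 1, |p1 y| ≤ b1 / y * φ y := by
    intro y hy
    rcases lt_or_eq_of_le hy.2 with h | h
    · rw [hp1eq y ⟨hy.1, h⟩]; exact hφb1 y hy
    · subst h
      exact limlem p1 (fun y => b1 / y * φ y) (hp1c.continuousOn 1 h1s)
        ((continuousWithinAt_const.div continuousWithinAt_id (by norm_num)).mul hφcont)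
        (fun z hz => by rw [hp1eq z hz]; exact hφb1 z (Ioo_subset_Ioc_self hz))
  have B2 : ∀ y ∈ Ioc (0:ℝ) 1, |p2 y| ≤ b2 / y ^ 2 * φ y := by
    intro y hy
    rcases lt_or_eq_of_le hy.2 with h | h
    · rw [hp2eq y ⟨hy.1, h⟩]; exact hφb2 y hy
    · subst h
      exact limlem p2 (fun y => b2 / y ^ 2 * φ y) (hp2c.continuousOn 1 h1s)
        ((continuousWithinAt_const.div (continuousWithinAt_id.pow 2) (by norm_num)).mul hφcont)
        (fun z hz => by rw [hp2eq z hz]; exact hφb2 z (Ioo_subset_Ioc_self hz))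
  have B3 : ∀ y ∈ Ioc (0:ℝ) 1, |p3 y| ≤ b3 / y ^ 3 * φ y := by
    intro y hy
    rcases lt_or_eq_of_le hy.2 with h | h
    · rw [hp3eq y ⟨hy.1, h⟩]; exact hφb3 y hy
    · subst h
      exact limlem p3 (fun y => b3 / y ^ 3 * φ y) (hp3cont 1 h1s)
        ((continuousWithinAt_const.div (continuousWithinAt_id.pow 3) (by norm_num)).mul hφcont)
        (fun z hz => by rw [hp3eq z hz]; exact hφb3 z (Ioo_subset_Ioc_self hz))
  -- composed bounds
  have Q1 : ∀ x ∈ Ioc (0:ℝ) 1, |p1 (gg c x)| ≤ 2 * b1 * φ (gg c x) := by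
    intro x hx
    obtain ⟨hy, hyh⟩ := hgmem x hx
    refine (B1 _ hy).trans (mul_le_mul_of_nonneg_right ?_ (hφ0 _ hy))
    rw [div_le_iff₀ (lt_of_lt_of_le one_half_pos hyh)]
    nlinarith [mul_nonneg hb1' (by linarith : (0:ℝ) ≤ 2 * gg c x - 1)]
  have Q2 : ∀ x ∈ Ioc (0:ℝ) 1, |p2 (gg c x)| ≤ 4 * b2 * φ (gg c x) := by
    intro x hx
    obtain ⟨hy, hyh⟩ := hgmem x hx
    refine (B2 _ hy).trans (mul_le_mul_of_nonneg_right ?_ (hφ0 _ hy))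
    rw [div_le_iff₀ (by positivity : (0:ℝ) < gg c x ^ 2)]
    nlinarith [mul_nonneg hb2' (show (0:ℝ) ≤ 4 * gg c x ^ 2 - 1 by
      nlinarith [mul_nonneg (by linarith : (0:ℝ) ≤ gg c x - 1/2)
        (by linarith : (0:ℝ) ≤ gg c x + 1/2)])]
  have Q3 : ∀ x ∈ Ioc (0:ℝ) 1, |p3 (gg c x)| ≤ 8 * b3 * φ (gg c x) := by
    intro x hx
    obtain ⟨hy, hyh⟩ := hgmem x hx
    refine (B3 _ hy).trans (mul_le_mul_of_nonneg_right ?_ (hφ0 _ hy))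
    rw [div_le_iff₀ (by positivity : (0:ℝ) < gg c x ^ 3)]
    nlinarith [mul_nonneg hb3' (show (0:ℝ) ≤ 8 * gg c x ^ 3 - 1 by
      nlinarith [mul_nonneg (by linarith : (0:ℝ) ≤ gg c x - 1/2) (sq_nonneg (gg c x)),
        mul_nonneg (by linarith : (0:ℝ) ≤ gg c x - 1/2)
          (by linarith : (0:ℝ) ≤ gg c x + 1/2)])]
  -- derivative computations (within Ioc 0 1)
  have hgd : ∀ x ∈ Ioc (0:ℝ) 1, HasDerivWithinAt (gg c) (A0 c x) (Ioc (0:ℝ) 1) x :=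
    fun x hx => (hasDerivAt_gg c hx.1).hasDerivWithinAt
  have hcomp : ∀ F F' : ℝ → ℝ,
      (∀ y ∈ Ioc (0:ℝ) 1, HasDerivWithinAt F (F' y) (Ioc (0:ℝ) 1) y) →
      ∀ x ∈ Ioc (0:ℝ) 1,
        HasDerivWithinAt (fun z => F (gg c z)) (F' (gg c x) * A0 c x) (Ioc (0:ℝ) 1) x :=
    fun F F' hF x hx => HasDerivWithinAt.comp x (hF _ (hmaps hx)) (hgd x hx) hmaps
  have hD1 : ∀ x ∈ Ioc (0:ℝ) 1,
      HasDerivWithinAt (Psi c φ) (FF1 c φ p1 x) (Ioc (0:ℝ) 1) x := by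
    intro x hx
    have h := ((hasDerivAt_A0 c hx.1).hasDerivWithinAt).mul (hcomp φ p1 hφd x hx)
    have hv : FF1 c φ p1 x = A1 c x * φ (gg c x) + A0 c x * (p1 (gg c x) * A0 c x) := by
      unfold FF1; ring
    rw [hv]; exact h
  have hD2 : ∀ x ∈ Ioc (0:ℝ) 1,
      HasDerivWithinAt (FF1 c φ p1) (FF2 c φ p1 p2 x) (Ioc (0:ℝ) 1) x := by
    intro x hx
    have ha := ((hasDerivAt_A1 c hx.1).hasDerivWithinAt).mul (hcomp φ p1 hφd x hx)
    have hb := (((hasDerivAt_A0 c hx.1).hasDerivWithinAt).pow 2).mul (hcomp p1 p2 hp1d x hx)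
    have h := ha.add hb
    refine h.congr_deriv ?_
    unfold FF2
    simp only [Pi.mul_apply, Pi.pow_apply]
    push_cast
    ring
  have hD3 : ∀ x ∈ Ioc (0:ℝ) 1,
      HasDerivWithinAt (FF2 c φ p1 p2) (FF3 c φ p1 p2 p3 x) (Ioc (0:ℝ) 1) x := by
    intro x hx
    have ha := ((hasDerivAt_A2 c hx.1).hasDerivWithinAt).mul (hcomp φ p1 hφd x hx)
    have hmid := ((((hasDerivAt_A0 c hx.1).const_mul (3:ℝ)).hasDerivWithinAt).mul
      ((hasDerivAt_A1 c hx.1).hasDerivWithinAt)).mul (hcomp p1 p2 hp1d x hx)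
    have hcub := (((hasDerivAt_A0 c hx.1).hasDerivWithinAt).pow 3).mul (hcomp p2 p3 hp2d x hx)
    have h := (ha.add hmid).add hcub
    refine h.congr_deriv ?_
    unfold FF3
    simp only [Pi.mul_apply, Pi.pow_apply]
    push_cast
    ring
  -- interior genuine derivatives
  have e1 : ∀ x ∈ Ioo (0:ℝ) 1, deriv (Psi c φ) x = FF1 c φ p1 x :=
    fun x hx => ((hD1 x (Ioo_subset_Ioc_self hx)).hasDerivAt (hIoo x hx)).deriv
  have e2 : ∀ x ∈ Ioo (0:ℝ) 1, deriv (deriv (Psi c φ)) x = FF2 c φ p1 p2 x := by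
    intro x hx
    have hev : deriv (Psi c φ) =ᶠ[𝓝 x] FF1 c φ p1 := by
      filter_upwards [isOpen_Ioo.mem_nhds hx] with z hz; exact e1 z hz
    rw [hev.deriv_eq]
    exact ((hD2 x (Ioo_subset_Ioc_self hx)).hasDerivAt (hIoo x hx)).deriv
  have e3 : ∀ x ∈ Ioo (0:ℝ) 1,
      deriv (deriv (deriv (Psi c φ))) x = FF3 c φ p1 p2 p3 x := by
    intro x hx
    have hev : deriv (deriv (Psi c φ)) =ᶠ[𝓝 x] FF2 c φ p1 p2 := by
      filter_upwards [isOpen_Ioo.mem_nhds hx] with z hz; exact e2 z hz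
    rw [hev.deriv_eq]
    exact ((hD3 x (Ioo_subset_Ioc_self hx)).hasDerivAt (hIoo x hx)).deriv
  -- dichotomies at the endpoint 1
  have d1 := derivA (hD1 1 h1s) (fun x _ => rfl) (Or.inl rfl)
  have d1' : deriv (Psi c φ) 1 = FF1 c φ p1 1 ∨ deriv (Psi c φ) 1 = 0 :=
    d1.elim Or.inr fun h => Or.inl h.2
  have d2 := derivA (hD2 1 h1s) e1 d1'
  have d2' : deriv (deriv (Psi c φ)) 1 = FF2 c φ p1 p2 1 ∨ deriv (deriv (Psi c φ)) 1 = 0 :=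
    d2.elim Or.inr fun h => Or.inl h.2
  have d3 := derivA (hD3 1 h1s) e2 d2'
  have d3' : deriv (deriv (deriv (Psi c φ))) 1 = FF3 c φ p1 p2 p3 1 ∨
      deriv (deriv (deriv (Psi c φ))) 1 = 0 :=
    d3.elim Or.inr fun h => Or.inl h.2
  -- nonnegativity of Psi
  have hA0pos : ∀ x ∈ Ioc (0:ℝ) 1, 0 < A0 c x := by
    intro x hx
    exact mul_pos (by positivity) (Real.rpow_pos_of_pos hx.1 _)
  have hPsin : ∀ x ∈ Ioc (0:ℝ) 1, 0 ≤ Psi c φ x :=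
    fun x hx => mul_nonneg (hA0pos x hx).le (hφ0 _ (hgmem x hx).1)
  -- the key pointwise bounds
  have key1 : ∀ x ∈ Ioc (0:ℝ) 1, |FF1 c φ p1 x| ≤ b1 / x * Psi c φ x := by
    intro x hx
    have hx0 : (0:ℝ) < x := hx.1
    have hx2 : (0:ℝ) < x ^ 2 := by positivity
    obtain ⟨hy, hyh⟩ := hgmem x hx
    have hφy : 0 ≤ φ (gg c x) := hφ0 _ hy
    have hu0 : 0 < x ^ c := Real.rpow_pos_of_pos hx0 c
    have hu1 : x ^ c ≤ 1 := Real.rpow_le_one hx0.le hx.2 hc0.le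
    have h1c : (0:ℝ) ≤ 1 - c := by linarith
    have hA0v : A0 c x = c/2 * (x ^ c / x) := by unfold A0; rw [E1lem hx0 c]
    have hA1abs : |A1 c x| = c/2 * (1-c) * (x ^ c / x ^ 2) := by
      have hv : A1 c x = -(c/2 * (1-c) * (x ^ c / x ^ 2)) := by
        unfold A1; rw [E2lem hx0 c]; ring
      rw [hv, abs_neg, abs_of_nonneg]
      have : (0:ℝ) ≤ x ^ c / x ^ 2 := by positivity
      exact mul_nonneg (mul_nonneg (by positivity) h1c) this
    have habs : |FF1 c φ p1 x| ≤ |A1 c x| * φ (gg c x) + (A0 c x) ^ 2 * |p1 (gg c x)| := by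
      unfold FF1
      refine (abs_add_le _ _).trans (le_of_eq ?_)
      rw [abs_mul, abs_mul, abs_of_nonneg hφy, abs_of_nonneg (sq_nonneg (A0 c x))]
    have hstep : |A1 c x| * φ (gg c x) + (A0 c x) ^ 2 * |p1 (gg c x)| ≤
        c/2 * (1-c) * (x ^ c / x ^ 2) * φ (gg c x) +
          (c/2 * (x ^ c / x)) ^ 2 * (2 * b1 * φ (gg c x)) := by
      rw [hA1abs, hA0v]
      exact add_le_add le_rfl (mul_le_mul_of_nonneg_left (Q1 x hx) (sq_nonneg _))
    refine (habs.trans hstep).trans ?_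
    have hnum : c/2 * (1-c) * (x ^ c / x ^ 2) * φ (gg c x) +
        (c/2 * (x ^ c / x)) ^ 2 * (2 * b1 * φ (gg c x)) =
        (c/2 * (1-c) * x ^ c * φ (gg c x) +
          c^2/4 * (x ^ c) ^ 2 * (2 * b1 * φ (gg c x))) / x ^ 2 := by
      ring
    have hPsiv : b1 / x * Psi c φ x = (b1 * (c/2 * x ^ c * φ (gg c x))) / x ^ 2 := by
      unfold Psi
      rw [hA0v]
      ring
    rw [hnum, hPsiv, div_le_div_iff₀ hx2 hx2]
    have hcore := core1 h1 hc0 hc1 hu0 hu1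
    have hNM : c/2 * (1-c) * x ^ c * φ (gg c x) +
        c^2/4 * (x ^ c) ^ 2 * (2 * b1 * φ (gg c x)) ≤ b1 * (c/2 * x ^ c * φ (gg c x)) := by
      nlinarith [mul_le_mul_of_nonneg_right hcore
        (show (0:ℝ) ≤ c/2 * x ^ c * φ (gg c x) by positivity)]
    exact mul_le_mul_of_nonneg_right hNM hx2.le
  have key2 : ∀ x ∈ Ioc (0:ℝ) 1, |FF2 c φ p1 p2 x| ≤ b2 / x ^ 2 * Psi c φ x := by
    intro x hx
    have hx0 : (0:ℝ) < x := hx.1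
    have hx3 : (0:ℝ) < x ^ 3 := by positivity
    obtain ⟨hy, hyh⟩ := hgmem x hx
    have hφy : 0 ≤ φ (gg c x) := hφ0 _ hy
    have hu0 : 0 < x ^ c := Real.rpow_pos_of_pos hx0 c
    have hu1 : x ^ c ≤ 1 := Real.rpow_le_one hx0.le hx.2 hc0.le
    have h1c : (0:ℝ) ≤ 1 - c := by linarith
    have h2c : (0:ℝ) ≤ 2 - c := by linarith
    have hA0v : A0 c x = c/2 * (x ^ c / x) := by unfold A0; rw [E1lem hx0 c]
    have hA0nn : 0 ≤ A0 c x := (hA0pos x hx).le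
    have hA1abs : |A1 c x| = c/2 * (1-c) * (x ^ c / x ^ 2) := by
      have hv : A1 c x = -(c/2 * (1-c) * (x ^ c / x ^ 2)) := by
        unfold A1; rw [E2lem hx0 c]; ring
      rw [hv, abs_neg, abs_of_nonneg]
      exact mul_nonneg (mul_nonneg (by positivity) h1c) (by positivity)
    have hA2abs : |A2 c x| = c/2 * (1-c) * (2-c) * (x ^ c / x ^ 3) := by
      have hv : A2 c x = c/2 * (1-c) * (2-c) * (x ^ c / x ^ 3) := by
        unfold A2; rw [E3lem hx0 c]; ring
      rw [hv, abs_of_nonneg]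
      exact mul_nonneg (mul_nonneg (mul_nonneg (by positivity) h1c) h2c) (by positivity)
    have habs : |FF2 c φ p1 p2 x| ≤ |A2 c x| * φ (gg c x) +
        3 * A0 c x * |A1 c x| * |p1 (gg c x)| + (A0 c x) ^ 3 * |p2 (gg c x)| := by
      unfold FF2
      refine (abs_add_le _ _).trans (add_le_add ((abs_add_le _ _).trans (add_le_add
        (le_of_eq ?_) (le_of_eq ?_))) (le_of_eq ?_))
      · rw [abs_mul, abs_of_nonneg hφy]
      · rw [abs_mul, abs_mul, abs_mul, abs_of_nonneg (by norm_num : (0:ℝ) ≤ 3),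
          abs_of_nonneg hA0nn]
      · rw [abs_mul, abs_of_nonneg (pow_nonneg hA0nn 3)]
    have hstep : |A2 c x| * φ (gg c x) + 3 * A0 c x * |A1 c x| * |p1 (gg c x)| +
        (A0 c x) ^ 3 * |p2 (gg c x)| ≤
        c/2 * (1-c) * (2-c) * (x ^ c / x ^ 3) * φ (gg c x) +
          3 * (c/2 * (x ^ c / x)) * (c/2 * (1-c) * (x ^ c / x ^ 2)) *
            (2 * b1 * φ (gg c x)) +
          (c/2 * (x ^ c / x)) ^ 3 * (4 * b2 * φ (gg c x)) := by
      rw [hA2abs, hA1abs, hA0v]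
      refine add_le_add (add_le_add le_rfl (mul_le_mul_of_nonneg_left (Q1 x hx)
        (mul_nonneg (by positivity)
          (mul_nonneg (mul_nonneg (by positivity) h1c) (by positivity)))))
        (mul_le_mul_of_nonneg_left (Q2 x hx) (by positivity))
    refine (habs.trans hstep).trans ?_
    have hnum : c/2 * (1-c) * (2-c) * (x ^ c / x ^ 3) * φ (gg c x) +
        3 * (c/2 * (x ^ c / x)) * (c/2 * (1-c) * (x ^ c / x ^ 2)) * (2 * b1 * φ (gg c x)) +
        (c/2 * (x ^ c / x)) ^ 3 * (4 * b2 * φ (gg c x)) =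
        (c/2 * (1-c) * (2-c) * x ^ c * φ (gg c x) +
          3 * c^2/4 * (1-c) * (x ^ c) ^ 2 * (2 * b1 * φ (gg c x)) +
          c^3/8 * (x ^ c) ^ 3 * (4 * b2 * φ (gg c x))) / x ^ 3 := by
      ring
    have hPsiv : b2 / x ^ 2 * Psi c φ x = (b2 * (c/2 * x ^ c * φ (gg c x))) / x ^ 3 := by
      unfold Psi
      rw [hA0v]
      ring
    rw [hnum, hPsiv, div_le_div_iff₀ hx3 hx3]
    have hcore := core2 h1 h2 hc0 hc1 hu0 hu1
    have hNM : c/2 * (1-c) * (2-c) * x ^ c * φ (gg c x) +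
        3 * c^2/4 * (1-c) * (x ^ c) ^ 2 * (2 * b1 * φ (gg c x)) +
        c^3/8 * (x ^ c) ^ 3 * (4 * b2 * φ (gg c x)) ≤
        b2 * (c/2 * x ^ c * φ (gg c x)) := by
      nlinarith [mul_le_mul_of_nonneg_right hcore
        (show (0:ℝ) ≤ c/2 * x ^ c * φ (gg c x) by positivity)]
    exact mul_le_mul_of_nonneg_right hNM hx3.le
  have key3 : ∀ x ∈ Ioc (0:ℝ) 1, |FF3 c φ p1 p2 p3 x| ≤ b3 / x ^ 3 * Psi c φ x := by
    intro x hx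
    have hx0 : (0:ℝ) < x := hx.1
    have hx4 : (0:ℝ) < x ^ 4 := by positivity
    obtain ⟨hy, hyh⟩ := hgmem x hx
    have hφy : 0 ≤ φ (gg c x) := hφ0 _ hy
    have hu0 : 0 < x ^ c := Real.rpow_pos_of_pos hx0 c
    have hu1 : x ^ c ≤ 1 := Real.rpow_le_one hx0.le hx.2 hc0.le
    have h1c : (0:ℝ) ≤ 1 - c := by linarith
    have h2c : (0:ℝ) ≤ 2 - c := by linarith
    have h3c : (0:ℝ) ≤ 3 - c := by linarith
    have hA0v : A0 c x = c/2 * (x ^ c / x) := by unfold A0; rw [E1lem hx0 c]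
    have hA0nn : 0 ≤ A0 c x := (hA0pos x hx).le
    have hA1abs : |A1 c x| = c/2 * (1-c) * (x ^ c / x ^ 2) := by
      have hv : A1 c x = -(c/2 * (1-c) * (x ^ c / x ^ 2)) := by
        unfold A1; rw [E2lem hx0 c]; ring
      rw [hv, abs_neg, abs_of_nonneg]
      exact mul_nonneg (mul_nonneg (by positivity) h1c) (by positivity)
    have hA3abs : |A3 c x| = c/2 * (1-c) * (2-c) * (3-c) * (x ^ c / x ^ 4) := by
      have hv : A3 c x = -(c/2 * (1-c) * (2-c) * (3-c) * (x ^ c / x ^ 4)) := by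
        unfold A3; rw [E4lem hx0 c]; ring
      rw [hv, abs_neg, abs_of_nonneg]
      exact mul_nonneg (mul_nonneg (mul_nonneg (mul_nonneg (by positivity) h1c) h2c) h3c)
        (by positivity)
    have hmidv : 4 * A0 c x * A2 c x + 3 * (A1 c x) ^ 2 =
        (c^2 * (1-c) * (2-c) + 3 * c^2/4 * (1-c) ^ 2) * ((x ^ c) ^ 2 / x ^ 4) := by
      unfold A0 A1 A2
      rw [E1lem hx0 c, E2lem hx0 c, E3lem hx0 c]
      ring
    have hmidnn : 0 ≤ c^2 * (1-c) * (2-c) + 3 * c^2/4 * (1-c) ^ 2 := by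
      have t1 : (0:ℝ) ≤ c^2 * (1-c) * (2-c) :=
        mul_nonneg (mul_nonneg (sq_nonneg c) h1c) h2c
      have t2 : (0:ℝ) ≤ 3 * c^2/4 * (1-c) ^ 2 := by positivity
      linarith
    have hmidabs : |4 * A0 c x * A2 c x + 3 * (A1 c x) ^ 2| =
        (c^2 * (1-c) * (2-c) + 3 * c^2/4 * (1-c) ^ 2) * ((x ^ c) ^ 2 / x ^ 4) := by
      rw [hmidv, abs_of_nonneg (mul_nonneg hmidnn (by positivity))]
    have habs : |FF3 c φ p1 p2 p3 x| ≤ |A3 c x| * φ (gg c x) +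
        |4 * A0 c x * A2 c x + 3 * (A1 c x) ^ 2| * |p1 (gg c x)| +
        6 * (A0 c x) ^ 2 * |A1 c x| * |p2 (gg c x)| +
        (A0 c x) ^ 4 * |p3 (gg c x)| := by
      unfold FF3
      refine (abs_add_le _ _).trans (add_le_add ((abs_add_le _ _).trans (add_le_add
        ((abs_add_le _ _).trans (add_le_add (le_of_eq ?_) (le_of_eq ?_))) (le_of_eq ?_)))
        (le_of_eq ?_))
      · rw [abs_mul, abs_of_nonneg hφy]
      · rw [abs_mul]
      · rw [abs_mul, abs_mul, abs_of_nonneg (by positivity : (0:ℝ) ≤ 6 * (A0 c x) ^ 2)]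
      · rw [abs_mul, abs_of_nonneg (pow_nonneg hA0nn 4)]
    have hstep : |A3 c x| * φ (gg c x) +
        |4 * A0 c x * A2 c x + 3 * (A1 c x) ^ 2| * |p1 (gg c x)| +
        6 * (A0 c x) ^ 2 * |A1 c x| * |p2 (gg c x)| +
        (A0 c x) ^ 4 * |p3 (gg c x)| ≤
        c/2 * (1-c) * (2-c) * (3-c) * (x ^ c / x ^ 4) * φ (gg c x) +
          (c^2 * (1-c) * (2-c) + 3 * c^2/4 * (1-c) ^ 2) * ((x ^ c) ^ 2 / x ^ 4) *
            (2 * b1 * φ (gg c x)) +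
          6 * (c/2 * (x ^ c / x)) ^ 2 * (c/2 * (1-c) * (x ^ c / x ^ 2)) *
            (4 * b2 * φ (gg c x)) +
          (c/2 * (x ^ c / x)) ^ 4 * (8 * b3 * φ (gg c x)) := by
      rw [hA3abs, hmidabs, hA1abs, hA0v]
      refine add_le_add (add_le_add (add_le_add le_rfl
        (mul_le_mul_of_nonneg_left (Q1 x hx) (mul_nonneg hmidnn (by positivity))))
        (mul_le_mul_of_nonneg_left (Q2 x hx) ?_)) (mul_le_mul_of_nonneg_left (Q3 x hx) ?_)
      · refine mul_nonneg (by positivity) ?_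
        exact mul_nonneg (mul_nonneg (by positivity) h1c) (by positivity)
      · positivity
    refine (habs.trans hstep).trans ?_
    have hnum : c/2 * (1-c) * (2-c) * (3-c) * (x ^ c / x ^ 4) * φ (gg c x) +
        (c^2 * (1-c) * (2-c) + 3 * c^2/4 * (1-c) ^ 2) * ((x ^ c) ^ 2 / x ^ 4) *
          (2 * b1 * φ (gg c x)) +
        6 * (c/2 * (x ^ c / x)) ^ 2 * (c/2 * (1-c) * (x ^ c / x ^ 2)) *
          (4 * b2 * φ (gg c x)) +
        (c/2 * (x ^ c / x)) ^ 4 * (8 * b3 * φ (gg c x)) =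
        (c/2 * (1-c) * (2-c) * (3-c) * x ^ c * φ (gg c x) +
          (c^2 * (1-c) * (2-c) + 3 * c^2/4 * (1-c) ^ 2) * (x ^ c) ^ 2 *
            (2 * b1 * φ (gg c x)) +
          6 * c^2/4 * (c/2) * (1-c) * (x ^ c) ^ 3 * (4 * b2 * φ (gg c x)) +
          c^4/16 * (x ^ c) ^ 4 * (8 * b3 * φ (gg c x))) / x ^ 4 := by
      ring
    have hPsiv : b3 / x ^ 3 * Psi c φ x = (b3 * (c/2 * x ^ c * φ (gg c x))) / x ^ 4 := by
      unfold Psi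
      rw [hA0v]
      ring
    rw [hnum, hPsiv, div_le_div_iff₀ hx4 hx4]
    have hcore := core3 h1 h2 h3 hc0 hc1 hu0 hu1
    have hNM : c/2 * (1-c) * (2-c) * (3-c) * x ^ c * φ (gg c x) +
        (c^2 * (1-c) * (2-c) + 3 * c^2/4 * (1-c) ^ 2) * (x ^ c) ^ 2 *
          (2 * b1 * φ (gg c x)) +
        6 * c^2/4 * (c/2) * (1-c) * (x ^ c) ^ 3 * (4 * b2 * φ (gg c x)) +
        c^4/16 * (x ^ c) ^ 4 * (8 * b3 * φ (gg c x)) ≤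
        b3 * (c/2 * x ^ c * φ (gg c x)) := by
      nlinarith [mul_le_mul_of_nonneg_right hcore
        (show (0:ℝ) ≤ c/2 * x ^ c * φ (gg c x) by positivity)]
    exact mul_le_mul_of_nonneg_right hNM hx4.le
  -- smoothness of Psi
  have hrc : ∀ r : ℝ, ContDiffOn ℝ 3 (fun x : ℝ => x ^ r) (Ioc (0:ℝ) 1) :=
    fun r x hx => (Real.contDiffAt_rpow_const_of_ne (ne_of_gt hx.1)).contDiffWithinAt
  have hggc : ContDiffOn ℝ 3 (gg c) (Ioc (0:ℝ) 1) := ((hrc c).add contDiffOn_const).div_const 2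
  have hPsic : ContDiffOn ℝ 3 (Psi c φ) (Ioc (0:ℝ) 1) :=
    (contDiffOn_const.mul (hrc (c-1))).mul (hφc.comp hggc hmaps)
  -- transfer to N2
  have hfun : g2 β = gg c := by
    funext z
    simp [g2, Stmt8Aux.gg, hcdef]
  have hN2eq : ∀ x ∈ Ioi (0:ℝ), N2 β φ x = Psi c φ x := by
    intro x hx
    have hd : deriv (g2 β) x = A0 c x := by rw [hfun]; exact (hasDerivAt_gg c hx).deriv
    show deriv (g2 β) x * φ (g2 β x) = A0 c x * φ (gg c x)
    rw [hd, hfun]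
  have hd1t : ∀ x ∈ Ioi (0:ℝ), deriv (N2 β φ) x = deriv (Psi c φ) x := by
    intro x hx
    apply Filter.EventuallyEq.deriv_eq
    filter_upwards [isOpen_Ioi.mem_nhds hx] with z hz
    exact hN2eq z hz
  have hd2t : ∀ x ∈ Ioi (0:ℝ), deriv (deriv (N2 β φ)) x = deriv (deriv (Psi c φ)) x := by
    intro x hx
    apply Filter.EventuallyEq.deriv_eq
    filter_upwards [isOpen_Ioi.mem_nhds hx] with z hz
    exact hd1t z hz
  have hd3t : ∀ x ∈ Ioi (0:ℝ),
      deriv (deriv (deriv (N2 β φ))) x = deriv (deriv (deriv (Psi c φ))) x := by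
    intro x hx
    apply Filter.EventuallyEq.deriv_eq
    filter_upwards [isOpen_Ioi.mem_nhds hx] with z hz
    exact hd2t z hz
  refine ⟨?_, ?_, ?_, ?_, ?_⟩
  · exact hPsic.congr fun x hx => hN2eq x hx.1
  · intro x hx
    rw [hN2eq x hx.1]
    exact hPsin x hx
  · intro x hx
    rw [hd1t x hx.1, hN2eq x hx.1]
    rcases lt_or_eq_of_le hx.2 with h | h
    · rw [e1 x ⟨hx.1, h⟩]; exact key1 x hx
    · subst h
      rcases d1' with h0 | h0 <;> rw [h0]
      · exact key1 1 h1s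
      · rw [abs_zero]
        exact mul_nonneg (div_nonneg hb1' (by norm_num)) (hPsin 1 h1s)
  · intro x hx
    rw [hd2t x hx.1, hN2eq x hx.1]
    rcases lt_or_eq_of_le hx.2 with h | h
    · rw [e2 x ⟨hx.1, h⟩]; exact key2 x hx
    · subst h
      rcases d2' with h0 | h0 <;> rw [h0]
      · exact key2 1 h1s
      · rw [abs_zero]
        exact mul_nonneg (div_nonneg hb2' (by norm_num)) (hPsin 1 h1s)
  · intro x hx
    rw [hd3t x hx.1, hN2eq x hx.1]
    rcases lt_or_eq_of_le hx.2 with h | h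
    · rw [e3 x ⟨hx.1, h⟩]; exact key3 x hx
    · subst h
      rcases d3' with h0 | h0 <;> rw [h0]
      · exact key3 1 h1s
      · rw [abs_zero]
        exact mul_nonneg (div_nonneg hb3' (by norm_num)) (hPsin 1 h1s)

end
end

section
/- The function (α,x) ↦ X_{γ,1}(x) is C² on (0,∞)×(0,1]. Moreover, for every B=[α_ℓ,α_u]×[1,β_u]⊂𝔇 there exist constants C₀,C₁,C₂>0 depending only on B such that for all x∈(0,1] and all γ=(α,β)∈B: |X_{γ,1}(x)| ≤ C₀·x^{1+α}(1−log x), |X_{γ,1}'(x)| ≤ C₁·x^{α}(1−log x), and |X_{γ,1}''(x)| ≤ C₂·x^{α−1}(1−log x). -/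
open MeasureTheory Real Set Filter

noncomputable section

namespace S10

lemma f1_strictMonoOn {α : ℝ} (hα : 0 < α) : StrictMonoOn (f1 α) (Ici 0) := by
  intro a ha b hb hab
  simp only [f1]
  have h2 : (0:ℝ) < 2 ^ α := rpow_pos_of_pos two_pos α
  have hpow : a ^ α ≤ b ^ α := rpow_le_rpow ha hab.le hα.le
  have ha' : (0:ℝ) ≤ a := ha
  have hb' : (0:ℝ) ≤ b := hb
  have hpa : (0:ℝ) ≤ a ^ α := rpow_nonneg ha' α
  nlinarith [mul_le_mul hab.le hpow hpa (le_trans ha' hab.le)]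

lemma f1_cont (α : ℝ) (hα : 0 < α) : Continuous (fun t => f1 α t) := by
  have h : Continuous fun t : ℝ => t ^ α :=
    continuous_iff_continuousAt.2 fun t => Real.continuousAt_rpow_const t α (Or.inr hα.le)
  unfold f1; continuity

lemma f1_self_le {α t : ℝ} (ht : 0 ≤ t) : t ≤ f1 α t := by
  have h2 : (0:ℝ) < 2 ^ α := rpow_pos_of_pos two_pos α
  have hpa : (0:ℝ) ≤ t ^ α := rpow_nonneg ht α
  simp only [f1]; nlinarith [mul_nonneg ht (mul_nonneg h2.le hpa)]

open scoped Classical in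
def G (α x : ℝ) : ℝ := if h : ∃ y, 0 ≤ y ∧ f1 α y = x then h.choose else 0

lemma G_spec {α x : ℝ} (hα : 0 < α) (hx : 0 ≤ x) : 0 ≤ G α x ∧ f1 α (G α x) = x := by
  have hex : ∃ y, 0 ≤ y ∧ f1 α y = x := by
    have h0 : f1 α 0 = 0 := by simp [f1]
    have hx' : x ∈ Icc (f1 α 0) (f1 α x) := by
      rw [h0]; exact ⟨hx, f1_self_le hx⟩
    obtain ⟨y, hy, hfy⟩ := intermediate_value_Icc hx ((f1_cont α hα).continuousOn) hx'
    exact ⟨y, hy.1, hfy⟩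
  have hG : G α x = hex.choose := dif_pos hex
  rw [hG]
  exact hex.choose_spec

lemma G_unique {α x y : ℝ} (hα : 0 < α) (hx : 0 ≤ x) (hy : 0 ≤ y) (hf : f1 α y = x) :
    G α x = y := by
  obtain ⟨h1, h2⟩ := G_spec hα hx
  exact (f1_strictMonoOn hα).injOn h1 hy (h2.trans hf.symm)

lemma G_pos {α x : ℝ} (hα : 0 < α) (hx : 0 < x) : 0 < G α x := by
  obtain ⟨h1, h2⟩ := G_spec hα hx.le
  rcases h1.lt_or_eq with h | h
  · exact h
  · exfalso; rw [← h] at h2; simp [f1] at h2; linarith [h2 ▸ hx]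

lemma G_le {α x : ℝ} (hα : 0 < α) (hx : 0 ≤ x) : G α x ≤ x := by
  obtain ⟨h1, h2⟩ := G_spec hα hx
  calc G α x ≤ f1 α (G α x) := f1_self_le h1
  _ = x := h2

lemma two_rpow_le {α : ℝ} (hα1 : α ≤ 1) : (2:ℝ) ^ α ≤ 2 := by
  calc (2:ℝ) ^ α ≤ 2 ^ (1:ℝ) := rpow_le_rpow_of_exponent_le one_le_two hα1
  _ = 2 := rpow_one 2

lemma one_le_two_rpow {α : ℝ} (hα : 0 ≤ α) : (1:ℝ) ≤ 2 ^ α := by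
  calc (1:ℝ) = 2 ^ (0:ℝ) := (rpow_zero 2).symm
  _ ≤ 2 ^ α := rpow_le_rpow_of_exponent_le one_le_two hα

lemma G_ge {α x : ℝ} (hα : 0 < α) (hα1 : α ≤ 1) (hx : 0 ≤ x) (hx1 : x ≤ 1) :
    x ≤ 3 * G α x := by
  obtain ⟨h1, h2⟩ := G_spec hα hx
  have hy1 : G α x ≤ 1 := le_trans (G_le hα hx) hx1
  have hpa : G α x ^ α ≤ 1 := rpow_le_one h1 hy1 hα.le
  have hpa0 : (0:ℝ) ≤ G α x ^ α := rpow_nonneg h1 α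
  have hc : (2:ℝ) ^ α ≤ 2 := two_rpow_le hα1
  have hc0 : (0:ℝ) < 2 ^ α := rpow_pos_of_pos two_pos α
  have h2' : x = G α x * (1 + 2 ^ α * G α x ^ α) := h2.symm
  nlinarith [mul_le_mul hc hpa hpa0 (by norm_num : (0:ℝ) ≤ 2),
    mul_le_mul_of_nonneg_left (mul_le_mul hc hpa hpa0 (by norm_num : (0:ℝ) ≤ 2)) h1]

lemma f1_half {α : ℝ} (hα : 0 < α) : f1 α (1/2) = 1 := by
  have : (2:ℝ) ^ α * (1/2 : ℝ) ^ α = 1 := by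
    rw [← mul_rpow (by norm_num) (by norm_num)]
    norm_num
  rw [f1, this]; norm_num

lemma G_le_half {α x : ℝ} (hα : 0 < α) (hx : 0 ≤ x) (hx1 : x ≤ 1) : G α x ≤ 1/2 := by
  obtain ⟨h1, h2⟩ := G_spec hα hx
  have := f1_half hα
  by_contra h
  push_neg at h
  have := f1_strictMonoOn hα (by norm_num : (1/2:ℝ) ∈ Ici (0:ℝ)) (Set.mem_Ici.2 h1) h
  rw [h2, f1_half hα] at this
  linarith

lemma g1_eq_G {α : ℝ} {g : ℝ → ℝ} (hα : 0 < α) (hg : IsG1 α g) {x : ℝ}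
    (hx : x ∈ Icc (0:ℝ) 1) : g x = G α x := by
  obtain ⟨hmem, hfx⟩ := hg x hx
  exact (G_unique hα hx.1 hmem.1 hfx).symm

end S10

namespace S10
open Topology

lemma contDiffAt_f1_pair {n : WithTop ℕ∞} {a b : ℝ} (hb : 0 < b) :
    ContDiffAt ℝ n (fun p : ℝ × ℝ => f1 p.1 p.2) (a, b) := by
  have h1 : ContDiffAt ℝ n (fun p : ℝ × ℝ => (2:ℝ) ^ p.1) (a, b) :=
    contDiffAt_const.rpow contDiffAt_fst (by norm_num)
  have h2 : ContDiffAt ℝ n (fun p : ℝ × ℝ => p.2 ^ p.1) (a, b) :=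
    contDiffAt_snd.rpow contDiffAt_fst hb.ne'
  exact contDiffAt_snd.mul (contDiffAt_const.add (h1.mul h2))

/-- 1D derivative of `f1 α`. -/
lemma hasDerivAt_f1 {α t : ℝ} (ht : 0 < t) :
    HasDerivAt (f1 α) (1 + 2 ^ α * (1 + α) * t ^ α) t := by
  have h1 : HasDerivAt (fun s : ℝ => s ^ α) (α * t ^ (α - 1)) t :=
    Real.hasDerivAt_rpow_const (Or.inl ht.ne')
  have h2 : HasDerivAt (fun s : ℝ => 1 + 2 ^ α * s ^ α) (2 ^ α * (α * t ^ (α - 1))) t :=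
    (h1.const_mul _).const_add 1
  have h3 := (hasDerivAt_id t).mul h2
  have key : t ^ (α - 1) * t = t ^ α := by
    rw [Real.rpow_sub ht, Real.rpow_one]
    field_simp
  have key2 : t * t ^ (α - 1) = t ^ α := by rw [mul_comm]; exact key
  refine h3.congr_deriv ?_
  simp only [id_eq]
  rw [← key2]
  ring

lemma contDiffAt_G {n : WithTop ℕ∞} (hn : 1 ≤ n) {a x : ℝ} (ha : 0 < a) (hx : 0 < x) :
    ContDiffAt ℝ n (fun p : ℝ × ℝ => G p.1 p.2) (a, x) := by
  obtain ⟨hb0, hfb⟩ := G_spec ha hx.le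
  have hb : 0 < G a x := G_pos ha hx
  set b := G a x with hbdef
  set Φ : ℝ × ℝ → ℝ × ℝ := fun p => (p.1, f1 p.1 p.2) with hΦdef
  have hF : ContDiffAt ℝ n (fun p : ℝ × ℝ => f1 p.1 p.2) (a, b) := contDiffAt_f1_pair hb
  have hΦ : ContDiffAt ℝ n Φ (a, b) := contDiffAt_fst.prodMk hF
  have hFd : DifferentiableAt ℝ (fun p : ℝ × ℝ => f1 p.1 p.2) (a, b) :=
    hF.differentiableAt (zero_lt_one.trans_le hn).ne'
  set f' : ℝ × ℝ →L[ℝ] ℝ := fderiv ℝ (fun p : ℝ × ℝ => f1 p.1 p.2) (a, b) with hf'def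
  -- the partial derivative in the second variable is positive
  have hslice : HasDerivAt (fun t => f1 a t) (f' (0, 1)) b := by
    have h2 : HasDerivAt (fun t : ℝ => ((a : ℝ), t)) ((0 : ℝ), (1 : ℝ)) b :=
      (hasDerivAt_const b a).prodMk (hasDerivAt_id b)
    have := hFd.hasFDerivAt.comp_hasDerivAt b h2
    exact this
  have hd : 0 < f' (0, 1) := by
    have := (hasDerivAt_f1 (α := a) hb).unique hslice
    rw [← this]
    have h2p : (0:ℝ) < 2 ^ a := rpow_pos_of_pos two_pos a
    have hbp : (0:ℝ) < b ^ a := rpow_pos_of_pos hb a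
    nlinarith [mul_pos (mul_pos h2p (by linarith : (0:ℝ) < 1 + a)) hbp]
  set d : ℝ := f' (0, 1) with hddef
  set A : ℝ →L[ℝ] ℝ := f'.comp (ContinuousLinearMap.inl ℝ ℝ ℝ) with hAdef
  have key : ∀ p : ℝ × ℝ, f' p = A p.1 + p.2 * d := by
    intro p
    have hp : p = (p.1, 0) + (0, p.2) := by simp
    have h01 : ((0:ℝ), p.2) = p.2 • ((0:ℝ), (1:ℝ)) := by simp
    calc f' p = f' ((p.1, 0) + (0, p.2)) := by rw [← hp]
      _ = f' (p.1, 0) + f' (0, p.2) := map_add _ _ _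
      _ = A p.1 + f' (p.2 • ((0:ℝ), (1:ℝ))) := by rw [← h01]; rfl
      _ = A p.1 + p.2 * d := by rw [f'.map_smul]; simp [hddef, smul_eq_mul]
  set M : ℝ × ℝ →L[ℝ] ℝ × ℝ := (ContinuousLinearMap.fst ℝ ℝ ℝ).prod f' with hMdef
  set N : ℝ × ℝ →L[ℝ] ℝ × ℝ := (ContinuousLinearMap.fst ℝ ℝ ℝ).prod
    (d⁻¹ • ((ContinuousLinearMap.snd ℝ ℝ ℝ) - A.comp (ContinuousLinearMap.fst ℝ ℝ ℝ))) with hNdef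
  have hMap : ∀ p : ℝ × ℝ, M p = (p.1, f' p) := fun p => rfl
  have hNap : ∀ q : ℝ × ℝ, N q = (q.1, d⁻¹ * (q.2 - A q.1)) := fun q => rfl
  have h1 : Function.LeftInverse N M := by
    intro p
    rw [hMap, hNap]
    simp only [key p]
    have : d⁻¹ * (A p.1 + p.2 * d - A p.1) = p.2 := by
      field_simp
      ring
    rw [this]
  have h2 : Function.RightInverse N M := by
    intro q
    rw [hNap, hMap]
    simp only [key]
    have : A q.1 + d⁻¹ * (q.2 - A q.1) * d = q.2 := by
      field_simp
      ring
    rw [this]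
  set e : (ℝ × ℝ) ≃L[ℝ] (ℝ × ℝ) := ContinuousLinearEquiv.equivOfInverse M N h1 h2 with hedef
  have hΦ' : HasFDerivAt Φ (e : ℝ × ℝ →L[ℝ] ℝ × ℝ) (a, b) := by
    have hcoe : (e : ℝ × ℝ →L[ℝ] ℝ × ℝ) = M := rfl
    rw [hcoe, hMdef]
    exact (hasFDerivAt_fst).prodMk hFd.hasFDerivAt
  have hS : HasStrictFDerivAt Φ (e : ℝ × ℝ →L[ℝ] ℝ × ℝ) (a, b) := hΦ.hasStrictFDerivAt' hΦ' (zero_lt_one.trans_le hn).ne'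
  set inv : ℝ × ℝ → ℝ × ℝ := hΦ.localInverse hΦ' (zero_lt_one.trans_le hn).ne' with hinvdef
  have hΦab : Φ (a, b) = (a, x) := by simp [hΦdef, hfb]
  have hinv_cd : ContDiffAt ℝ n inv (a, x) := by
    rw [← hΦab]; exact hΦ.to_localInverse hΦ' (zero_lt_one.trans_le hn).ne'
  have hinvab : inv (a, x) = (a, b) := by
    rw [← hΦab]; exact hΦ.localInverse_apply_image hΦ' (zero_lt_one.trans_le hn).ne'
  have hinv_eq : inv = hS.localInverse Φ e (a, b) := rfl
  have hev1 : ∀ᶠ q in 𝓝 (a, x), Φ (inv q) = q := by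
    rw [← hΦab, hinv_eq]; exact hS.eventually_right_inverse
  have hcont : ContinuousAt inv (a, x) := hinv_cd.continuousAt
  have hev2 : ∀ᶠ q in 𝓝 (a, x), 0 < (inv q).2 := by
    have h2 : ContinuousAt (fun q => (inv q).2) (a, x) := continuous_snd.continuousAt.comp hcont
    have : Ioi (0:ℝ) ∈ 𝓝 ((inv (a, x)).2) := by
      rw [hinvab]; exact Ioi_mem_nhds hb
    exact h2.eventually_mem this
  have hev3 : ∀ᶠ q in 𝓝 (a, x), q ∈ Ioi (0:ℝ) ×ˢ Ioi (0:ℝ) :=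
    (isOpen_Ioi.prod isOpen_Ioi).eventually_mem (Set.mem_prod.2 ⟨ha, hx⟩)
  have hevG : (fun q : ℝ × ℝ => G q.1 q.2) =ᶠ[𝓝 (a, x)] fun q => (inv q).2 := by
    filter_upwards [hev1, hev2, hev3] with q h1q h2q h3q
    have hq1 : (inv q).1 = q.1 := by
      have := congrArg Prod.fst h1q; simpa [hΦdef] using this
    have hq2 : f1 (inv q).1 (inv q).2 = q.2 := by
      have := congrArg Prod.snd h1q; simpa [hΦdef] using this
    rw [hq1] at hq2
    have h3q' := Set.mem_prod.1 h3q
    exact G_unique h3q'.1 (le_of_lt h3q'.2) h2q.le hq2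
  exact (ContDiffAt.comp (a, x) contDiffAt_snd hinv_cd).congr_of_eventuallyEq hevG

lemma contDiffAt_G1 {n : WithTop ℕ∞} (hn : 1 ≤ n) {a x : ℝ} (ha : 0 < a) (hx : 0 < x) :
    ContDiffAt ℝ n (fun t => G a t) x := by
  exact ContDiffAt.comp x (contDiffAt_G hn ha hx) (contDiffAt_const.prodMk contDiffAt_id)

end S10

namespace S10
open Topology

def Pf (α t : ℝ) : ℝ := 1 + 2 ^ α * (1 + α) * t ^ α
def uf (α t : ℝ) : ℝ := 2 ^ α * t ^ α * ((1 + α) * (Real.log 2 + Real.log t) + 1)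
def vf (α t : ℝ) : ℝ :=
  2 ^ α * t ^ (α - 1) * (α * ((1 + α) * (Real.log 2 + Real.log t) + 1) + (1 + α))
def Pd (α t : ℝ) : ℝ := 2 ^ α * (1 + α) * (α * t ^ (α - 1))
def W (α x : ℝ) : ℝ :=
  (vf α (G α x) * (1 / Pf α (G α x)) * Pf α (G α x) -
    uf α (G α x) * (Pd α (G α x) * (1 / Pf α (G α x)))) / Pf α (G α x) ^ 2

lemma Pf_ge_one {α t : ℝ} (ha : 0 < α) (ht : 0 ≤ t) : 1 ≤ Pf α t := by
  have h1 : (0:ℝ) < 2 ^ α := rpow_pos_of_pos two_pos α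
  have h2 : (0:ℝ) ≤ t ^ α := rpow_nonneg ht α
  have : 0 ≤ 2 ^ α * (1 + α) * t ^ α := by positivity
  simp only [Pf]; linarith

lemma Pf_pos {α t : ℝ} (ha : 0 < α) (ht : 0 ≤ t) : 0 < Pf α t :=
  lt_of_lt_of_le one_pos (Pf_ge_one ha ht)

lemma hasDerivAt_Pf {α t : ℝ} (ht : 0 < t) : HasDerivAt (Pf α) (Pd α t) t := by
  have h1 : HasDerivAt (fun s : ℝ => s ^ α) (α * t ^ (α - 1)) t :=
    Real.hasDerivAt_rpow_const (Or.inl ht.ne')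
  exact (h1.const_mul (2 ^ α * (1 + α))).const_add 1

lemma hasDerivAt_uf {α t : ℝ} (ht : 0 < t) : HasDerivAt (uf α) (vf α t) t := by
  have h1 : HasDerivAt (fun s : ℝ => s ^ α) (α * t ^ (α - 1)) t :=
    Real.hasDerivAt_rpow_const (Or.inl ht.ne')
  have hlog : HasDerivAt Real.log t⁻¹ t := Real.hasDerivAt_log ht.ne'
  have hA : HasDerivAt (fun s : ℝ => (1 + α) * (Real.log 2 + Real.log s) + 1)
      ((1 + α) * t⁻¹) t := by
    have := ((hlog.const_add (Real.log 2)).const_mul (1 + α)).add_const 1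
    simpa using this
  have hprod := (h1.mul hA).const_mul ((2:ℝ) ^ α)
  have hts : t ^ α * t⁻¹ = t ^ (α - 1) := by
    rw [Real.rpow_sub ht, Real.rpow_one, div_eq_mul_inv]
  have : HasDerivAt (fun s : ℝ => 2 ^ α * (s ^ α * ((1 + α) * (Real.log 2 + Real.log s) + 1)))
      (2 ^ α * (α * t ^ (α - 1) * ((1 + α) * (Real.log 2 + Real.log t) + 1) +
        t ^ α * ((1 + α) * t⁻¹))) t := hprod
  have heq : (fun s : ℝ => 2 ^ α * (s ^ α * ((1 + α) * (Real.log 2 + Real.log s) + 1))) = uf α := by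
    funext s; simp only [uf]; ring
  rw [heq] at this
  convert this using 1
  simp only [vf]
  rw [show t ^ α * ((1 + α) * t⁻¹) = (1 + α) * (t ^ α * t⁻¹) by ring, hts]
  ring

lemma hasDerivAt_G1' {α x : ℝ} (ha : 0 < α) (hx : 0 < x) :
    HasDerivAt (G α) (1 / Pf α (G α x)) x := by
  obtain ⟨hy0, hfy⟩ := G_spec ha hx.le
  have hy : 0 < G α x := G_pos ha hx
  have hdiff : DifferentiableAt ℝ (G α) x :=
    (contDiffAt_G1 (n := 1) le_rfl ha hx).differentiableAt one_ne_zero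
  have hG : HasDerivAt (G α) (deriv (G α) x) x := hdiff.hasDerivAt
  have hP : 0 < Pf α (G α x) := Pf_pos ha hy0
  have hcomp : HasDerivAt (fun t => f1 α (G α t)) (Pf α (G α x) * deriv (G α) x) x := by
    have h := (hasDerivAt_f1 (α := α) hy).comp x hG
    exact h
  have hid : HasDerivAt (fun t => f1 α (G α t)) 1 x := by
    have hev : (fun t => f1 α (G α t)) =ᶠ[𝓝 x] id := by
      filter_upwards [isOpen_Ioi.eventually_mem hx] with t ht
      exact (G_spec ha (le_of_lt ht)).2
    exact (hasDerivAt_id x).congr_of_eventuallyEq hev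
  have huniq := hcomp.unique hid
  have hder : deriv (G α) x = 1 / Pf α (G α x) := by
    field_simp
    linarith [huniq]
  rwa [hder] at hG

lemma hasDerivAt_X1G {α x : ℝ} (ha : 0 < α) (hx : 0 < x) :
    HasDerivAt (X1 α (G α)) (uf α (G α x) / Pf α (G α x)) x := by
  obtain ⟨hy0, hfy⟩ := G_spec ha hx.le
  have hy : 0 < G α x := G_pos ha hx
  have hG := hasDerivAt_G1' ha hx
  have hP : 0 < Pf α (G α x) := Pf_pos ha hy0
  set y := G α x with hydef
  -- outer function
  have h1 : HasDerivAt (fun s : ℝ => s ^ (1 + α)) ((1 + α) * y ^ (1 + α - 1)) y :=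
    Real.hasDerivAt_rpow_const (Or.inl hy.ne')
  have hlog : HasDerivAt Real.log y⁻¹ y := Real.hasDerivAt_log hy.ne'
  have hL : HasDerivAt (fun s : ℝ => Real.log 2 + Real.log s) y⁻¹ y := by
    simpa using hlog.const_add (Real.log 2)
  have houter := (h1.mul hL).const_mul ((2:ℝ) ^ α)
  have hts : y ^ (1 + α) * y⁻¹ = y ^ α := by
    rw [show (α:ℝ) = 1 + α - 1 by ring, Real.rpow_sub hy, Real.rpow_one, div_eq_mul_inv]
    ring_nf
  have houter' : HasDerivAt (fun s : ℝ => 2 ^ α * (s ^ (1 + α) * (Real.log 2 + Real.log s)))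
      (uf α y) y := by
    refine houter.congr_deriv ?_
    simp only [uf]
    rw [show (1 + α - 1 : ℝ) = α by ring]
    rw [show y ^ (1 + α) * y⁻¹ = y ^ α from hts]
    ring_nf
  have hcomp := houter'.comp x hG
  have : HasDerivAt (fun t => 2 ^ α * (G α t ^ (1 + α) * (Real.log 2 + Real.log (G α t))))
      (uf α y * (1 / Pf α y)) x := hcomp
  have heq : (fun t => 2 ^ α * (G α t ^ (1 + α) * (Real.log 2 + Real.log (G α t)))) =
      X1 α (G α) := by
    funext t; simp only [X1]; ring
  rw [heq] at this
  convert this using 1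
  ring

lemma deriv_X1G_eq {α x : ℝ} (ha : 0 < α) (hx : 0 < x) :
    deriv (X1 α (G α)) x = uf α (G α x) / Pf α (G α x) := (hasDerivAt_X1G ha hx).deriv

lemma hasDerivAt_D1 {α x : ℝ} (ha : 0 < α) (hx : 0 < x) :
    HasDerivAt (fun t => uf α (G α t) / Pf α (G α t)) (W α x) x := by
  obtain ⟨hy0, hfy⟩ := G_spec ha hx.le
  have hy : 0 < G α x := G_pos ha hx
  have hG := hasDerivAt_G1' ha hx
  have hP : 0 < Pf α (G α x) := Pf_pos ha hy0
  have hu := (hasDerivAt_uf (α := α) hy).comp x hG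
  have hp := (hasDerivAt_Pf (α := α) hy).comp x hG
  exact hu.div hp hP.ne'

lemma hasDerivAt_deriv_X1G {α x : ℝ} (ha : 0 < α) (hx : 0 < x) :
    HasDerivAt (deriv (X1 α (G α))) (W α x) x := by
  have hev : deriv (X1 α (G α)) =ᶠ[𝓝 x] fun t => uf α (G α t) / Pf α (G α t) := by
    filter_upwards [isOpen_Ioi.eventually_mem hx] with t ht
    exact deriv_X1G_eq ha ht
  exact (hasDerivAt_D1 ha hx).congr_of_eventuallyEq hev

end S10

namespace S10
open Topology

/-- Common facts bundle. -/
lemma facts {α x : ℝ} (ha : 0 < α) (ha1 : α < 1) (hx : 0 < x) (hx1 : x ≤ 1) :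
    0 < G α x ∧ G α x ≤ x ∧ x ≤ 3 * G α x ∧ G α x ≤ 1/2 ∧
    |Real.log 2 + Real.log (G α x)| ≤ 2 - Real.log x ∧ Real.log x ≤ 0 := by
  have hy : 0 < G α x := G_pos ha hx
  have hyx : G α x ≤ x := G_le ha hx.le
  have h3 : x ≤ 3 * G α x := G_ge ha ha1.le hx.le hx1
  have hyh : G α x ≤ 1/2 := G_le_half ha hx.le hx1
  have hlx : Real.log x ≤ 0 := Real.log_nonpos hx.le hx1
  have hlog2 : (0:ℝ) ≤ Real.log 2 := Real.log_nonneg one_le_two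
  have hly : Real.log (G α x) ≤ -Real.log 2 := by
    have := Real.log_le_log hy hyh
    rwa [show (1/2 : ℝ) = 2⁻¹ by norm_num, Real.log_inv] at this
  have hly2 : Real.log x - Real.log 3 ≤ Real.log (G α x) := by
    have h := Real.log_le_log hx h3
    rw [Real.log_mul (by norm_num) hy.ne'] at h
    linarith
  have hlog3 : Real.log 3 ≤ 2 := by
    have := Real.log_le_sub_one_of_pos (by norm_num : (0:ℝ) < 3); linarith
  refine ⟨hy, hyx, h3, hyh, ?_, hlx⟩
  rw [abs_of_nonpos (by linarith)]
  linarith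

lemma abs_uf_le {α x : ℝ} (ha : 0 < α) (ha1 : α < 1) (hx : 0 < x) (hx1 : x ≤ 1) :
    |uf α (G α x)| ≤ 2 * G α x ^ α * (5 - 2 * Real.log x) := by
  obtain ⟨hy, hyx, h3, hyh, habs, hlx⟩ := facts ha ha1 hx hx1
  have hc2 : (2:ℝ) ^ α ≤ 2 := two_rpow_le ha1.le
  have hc0 : (0:ℝ) < 2 ^ α := rpow_pos_of_pos two_pos α
  have hyα : (0:ℝ) ≤ G α x ^ α := rpow_nonneg hy.le α
  have hA : |(1 + α) * (Real.log 2 + Real.log (G α x)) + 1| ≤ 5 - 2 * Real.log x := by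
    have h1 : |(1 + α) * (Real.log 2 + Real.log (G α x)) + 1| ≤
        (1 + α) * |Real.log 2 + Real.log (G α x)| + 1 := by
      calc |(1 + α) * (Real.log 2 + Real.log (G α x)) + 1| ≤
          |(1 + α) * (Real.log 2 + Real.log (G α x))| + |(1:ℝ)| := abs_add_le _ _
        _ = (1 + α) * |Real.log 2 + Real.log (G α x)| + 1 := by
            rw [abs_mul, abs_of_nonneg (by linarith : (0:ℝ) ≤ 1 + α), abs_one]
    nlinarith [abs_nonneg (Real.log 2 + Real.log (G α x))]
  have : |uf α (G α x)| = 2 ^ α * G α x ^ α *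
      |(1 + α) * (Real.log 2 + Real.log (G α x)) + 1| := by
    simp only [uf, abs_mul, abs_of_nonneg hc0.le, abs_of_nonneg hyα]
  rw [this]
  have h5 : (0:ℝ) ≤ 5 - 2 * Real.log x := by linarith
  calc 2 ^ α * G α x ^ α * |(1 + α) * (Real.log 2 + Real.log (G α x)) + 1|
      ≤ 2 * G α x ^ α * (5 - 2 * Real.log x) := by
        apply mul_le_mul _ hA (abs_nonneg _) (by positivity)
        exact mul_le_mul_of_nonneg_right hc2 hyα

lemma bound0 {α x : ℝ} (ha : 0 < α) (ha1 : α < 1) (hx : 0 < x) (hx1 : x ≤ 1) :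
    |X1 α (G α) x| ≤ 6 * x ^ (1+α) * (1 - Real.log x) := by
  obtain ⟨hy, hyx, h3, hyh, habs, hlx⟩ := facts ha ha1 hx hx1
  have hc2 : (2:ℝ) ^ α ≤ 2 := two_rpow_le ha1.le
  have hc0 : (0:ℝ) < 2 ^ α := rpow_pos_of_pos two_pos α
  have hyp : (0:ℝ) ≤ G α x ^ (1+α) := rpow_nonneg hy.le _
  have ht1 : G α x ^ (1+α) ≤ x ^ (1+α) := rpow_le_rpow hy.le hyx (by linarith)
  have h2l : (0:ℝ) ≤ 2 - Real.log x := by linarith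
  have habs' : |X1 α (G α) x| = 2 ^ α * G α x ^ (1+α) *
      |Real.log 2 + Real.log (G α x)| := by
    simp only [X1, abs_mul, abs_of_nonneg hc0.le, abs_of_nonneg hyp]
  rw [habs']
  calc 2 ^ α * G α x ^ (1+α) * |Real.log 2 + Real.log (G α x)|
      ≤ 2 * x ^ (1+α) * (2 - Real.log x) := by
        apply mul_le_mul _ habs (abs_nonneg _) (by positivity)
        exact mul_le_mul hc2 ht1 hyp (by norm_num)
    _ ≤ 6 * x ^ (1+α) * (1 - Real.log x) := by
        nlinarith [mul_nonneg (rpow_nonneg hx.le (1+α))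
          (by linarith : (0:ℝ) ≤ 2 - 4 * Real.log x)]

lemma bound1 {α x : ℝ} (ha : 0 < α) (ha1 : α < 1) (hx : 0 < x) (hx1 : x ≤ 1) :
    |uf α (G α x) / Pf α (G α x)| ≤ 14 * x ^ α * (1 - Real.log x) := by
  obtain ⟨hy, hyx, h3, hyh, habs, hlx⟩ := facts ha ha1 hx hx1
  have hP1 : 1 ≤ Pf α (G α x) := Pf_ge_one ha hy.le
  have h1 : |uf α (G α x) / Pf α (G α x)| ≤ |uf α (G α x)| := by
    rw [abs_div, abs_of_nonneg (by linarith : (0:ℝ) ≤ Pf α (G α x))]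
    exact div_le_self (abs_nonneg _) hP1
  have h2 := abs_uf_le ha ha1 hx hx1
  have hyα : G α x ^ α ≤ x ^ α := rpow_le_rpow hy.le hyx ha.le
  have h5 : (0:ℝ) ≤ 5 - 2 * Real.log x := by linarith
  calc |uf α (G α x) / Pf α (G α x)| ≤ 2 * G α x ^ α * (5 - 2 * Real.log x) :=
        le_trans h1 h2
    _ ≤ 2 * x ^ α * (5 - 2 * Real.log x) := by
        apply mul_le_mul_of_nonneg_right _ h5
        linarith
    _ ≤ 14 * x ^ α * (1 - Real.log x) := by
        nlinarith [mul_nonneg (rpow_nonneg hx.le α)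
          (by linarith : (0:ℝ) ≤ 4 - 10 * Real.log x)]

set_option maxHeartbeats 1000000 in
lemma bound2 {α x : ℝ} (ha : 0 < α) (ha1 : α < 1) (hx : 0 < x) (hx1 : x ≤ 1) :
    |W α x| ≤ 222 * x ^ (α-1) * (1 - Real.log x) := by
  obtain ⟨hy, hyx, h3, hyh, habs, hlx⟩ := facts ha ha1 hx hx1
  set y := G α x with hydef
  have hP1 : 1 ≤ Pf α y := Pf_ge_one ha hy.le
  have hP0 : 0 < Pf α y := by linarith
  have hc2 : (2:ℝ) ^ α ≤ 2 := two_rpow_le ha1.le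
  have hc0 : (0:ℝ) < 2 ^ α := rpow_pos_of_pos two_pos α
  have hyα : (0:ℝ) ≤ y ^ α := rpow_nonneg hy.le α
  have hyα1 : y ^ α ≤ 1 := rpow_le_one hy.le (by linarith) ha.le
  have hym : (0:ℝ) ≤ y ^ (α-1) := rpow_nonneg hy.le _
  -- simplify W
  have hW : W α x = (vf α y - uf α y * (Pd α y / Pf α y)) / Pf α y ^ 2 := by
    rw [W]
    rw [← hydef]
    field_simp
  -- |A| ≤ 5 - 2 log x
  have hA : |(1 + α) * (Real.log 2 + Real.log y) + 1| ≤ 5 - 2 * Real.log x := by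
    have h1 : |(1 + α) * (Real.log 2 + Real.log y) + 1| ≤
        (1 + α) * |Real.log 2 + Real.log y| + 1 := by
      calc |(1 + α) * (Real.log 2 + Real.log y) + 1| ≤
          |(1 + α) * (Real.log 2 + Real.log y)| + |(1:ℝ)| := abs_add_le _ _
        _ = (1 + α) * |Real.log 2 + Real.log y| + 1 := by
            rw [abs_mul, abs_of_nonneg (by linarith : (0:ℝ) ≤ 1 + α), abs_one]
    nlinarith [abs_nonneg (Real.log 2 + Real.log y)]
  -- |vf| ≤ 2 y^(α-1) (7 - 2 log x)
  have hvf : |vf α y| ≤ 2 * y ^ (α-1) * (7 - 2 * Real.log x) := by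
    have hB : |α * ((1 + α) * (Real.log 2 + Real.log y) + 1) + (1 + α)| ≤ 7 - 2 * Real.log x := by
      have h1 : |α * ((1 + α) * (Real.log 2 + Real.log y) + 1) + (1 + α)| ≤
          α * |(1 + α) * (Real.log 2 + Real.log y) + 1| + (1 + α) := by
        calc |α * ((1 + α) * (Real.log 2 + Real.log y) + 1) + (1 + α)| ≤
            |α * ((1 + α) * (Real.log 2 + Real.log y) + 1)| + |(1 + α)| := abs_add_le _ _
          _ = α * |(1 + α) * (Real.log 2 + Real.log y) + 1| + (1 + α) := by
              rw [abs_mul, abs_of_nonneg ha.le, abs_of_nonneg (by linarith : (0:ℝ) ≤ 1 + α)]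
      nlinarith [abs_nonneg ((1 + α) * (Real.log 2 + Real.log y) + 1), hA,
        abs_nonneg (Real.log 2 + Real.log y)]
    have : |vf α y| = 2 ^ α * y ^ (α-1) *
        |α * ((1 + α) * (Real.log 2 + Real.log y) + 1) + (1 + α)| := by
      simp only [vf, abs_mul, abs_of_nonneg hc0.le, abs_of_nonneg hym]
    rw [this]
    apply mul_le_mul _ hB (abs_nonneg _) (by positivity)
    exact mul_le_mul_of_nonneg_right hc2 hym
  -- |Pd| ≤ 4 y^(α-1)
  have hPd : |Pd α y| ≤ 4 * y ^ (α-1) := by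
    have : |Pd α y| = 2 ^ α * (1 + α) * (α * y ^ (α-1)) := by
      simp only [Pd, abs_mul, abs_of_nonneg hc0.le, abs_of_nonneg ha.le,
        abs_of_nonneg (by linarith : (0:ℝ) ≤ 1 + α), abs_of_nonneg hym]
    rw [this]
    have e1 : 2 ^ α * (1 + α) ≤ 4 := by nlinarith
    have e2 : α * y ^ (α-1) ≤ 1 * y ^ (α-1) := by
      apply mul_le_mul_of_nonneg_right ha1.le hym
    have e3 : (0:ℝ) ≤ α * y ^ (α-1) := mul_nonneg ha.le hym
    calc 2 ^ α * (1 + α) * (α * y ^ (α-1)) ≤ 4 * (1 * y ^ (α-1)) :=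
          mul_le_mul e1 e2 e3 (by norm_num)
      _ = 4 * y ^ (α-1) := by ring
  have huf := abs_uf_le ha ha1 hx hx1
  rw [← hydef] at huf
  -- |uf * (Pd/P)| ≤ 8 y^(α-1) (5 - 2 log x)
  have hufPd : |uf α y * (Pd α y / Pf α y)| ≤ 8 * y ^ (α-1) * (5 - 2 * Real.log x) := by
    have h5 : (0:ℝ) ≤ 5 - 2 * Real.log x := by linarith
    have hd : |Pd α y / Pf α y| ≤ 4 * y ^ (α-1) := by
      rw [abs_div, abs_of_nonneg hP0.le]
      exact le_trans (div_le_self (abs_nonneg _) hP1) hPd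
    calc |uf α y * (Pd α y / Pf α y)| = |uf α y| * |Pd α y / Pf α y| := abs_mul _ _
      _ ≤ (2 * y ^ α * (5 - 2 * Real.log x)) * (4 * y ^ (α-1)) := by
          apply mul_le_mul huf hd (abs_nonneg _) (by positivity)
      _ = 8 * (y ^ α * y ^ (α-1)) * (5 - 2 * Real.log x) := by ring
      _ ≤ 8 * y ^ (α-1) * (5 - 2 * Real.log x) := by
          apply mul_le_mul_of_nonneg_right _ h5
          nlinarith [mul_le_mul_of_nonneg_right hyα1 hym]
  -- combine
  have hnum : |vf α y - uf α y * (Pd α y / Pf α y)| ≤ y ^ (α-1) * (54 - 20 * Real.log x) := by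
    calc |vf α y - uf α y * (Pd α y / Pf α y)| ≤
        |vf α y| + |uf α y * (Pd α y / Pf α y)| := abs_sub _ _
      _ ≤ 2 * y ^ (α-1) * (7 - 2 * Real.log x) + 8 * y ^ (α-1) * (5 - 2 * Real.log x) := by
          linarith
      _ = y ^ (α-1) * (54 - 20 * Real.log x) := by ring
  have hWle : |W α x| ≤ y ^ (α-1) * (54 - 20 * Real.log x) := by
    rw [hW, abs_div, abs_of_nonneg (by positivity : (0:ℝ) ≤ Pf α y ^ 2)]
    have h2 : 1 ≤ Pf α y ^ 2 := by nlinarith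
    exact le_trans (div_le_self (abs_nonneg _) h2) hnum
  -- y^(α-1) ≤ 3 x^(α-1)
  have hxm : (0:ℝ) ≤ x ^ (α-1) := rpow_nonneg hx.le _
  have hy3 : y ^ (α-1) ≤ 3 * x ^ (α-1) := by
    have h1 : y ^ (α-1) ≤ (x/3) ^ (α-1) :=
      rpow_le_rpow_of_nonpos (by positivity) (by linarith) (by linarith)
    have h2 : (x/3 : ℝ) ^ (α-1) = x ^ (α-1) * ((3:ℝ) ^ (α-1))⁻¹ := by
      rw [Real.div_rpow hx.le (by norm_num : (0:ℝ) ≤ 3), div_eq_mul_inv]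
    have h3' : ((3:ℝ) ^ (α-1))⁻¹ = (3:ℝ) ^ (1-α) := by
      rw [← Real.rpow_neg (by norm_num : (0:ℝ) ≤ 3)]
      norm_num
    have h4 : (3:ℝ) ^ (1-α) ≤ 3 := by
      calc (3:ℝ) ^ (1-α) ≤ 3 ^ (1:ℝ) :=
            rpow_le_rpow_of_exponent_le (by norm_num) (by linarith)
        _ = 3 := Real.rpow_one 3
    calc y ^ (α-1) ≤ x ^ (α-1) * (3:ℝ) ^ (1-α) := by rw [← h3', ← h2]; exact h1
      _ ≤ x ^ (α-1) * 3 := mul_le_mul_of_nonneg_left h4 hxm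
      _ = 3 * x ^ (α-1) := by ring
  calc |W α x| ≤ y ^ (α-1) * (54 - 20 * Real.log x) := hWle
    _ ≤ 3 * x ^ (α-1) * (54 - 20 * Real.log x) := by
        apply mul_le_mul_of_nonneg_right hy3 (by linarith)
    _ ≤ 222 * x ^ (α-1) * (1 - Real.log x) := by
        nlinarith [mul_nonneg hxm (by linarith : (0:ℝ) ≤ 60 - 162 * Real.log x)]

end S10

open Topology

/-- regularity and bounds for `X_{γ,1}`. -/
theorem stmt10 (g1 : ℝ → ℝ → ℝ) (hg1 : ∀ α : ℝ, 0 < α → IsG1 α (g1 α)) :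
    ContDiffOn ℝ 2 (fun p : ℝ × ℝ => X1 p.1 (g1 p.1) p.2) (Ioi (0:ℝ) ×ˢ Ioc (0:ℝ) 1) ∧
    ∀ αl αu βu : ℝ, 0 < αl → αl ≤ αu → αu < 1 → 1 ≤ βu → αu * βu < 1 →
      ∃ C0 C1 C2 : ℝ, 0 < C0 ∧ 0 < C1 ∧ 0 < C2 ∧
        ∀ α ∈ Icc αl αu, ∀ β ∈ Icc 1 βu, ∀ x ∈ Ioc (0:ℝ) 1,
          |X1 α (g1 α) x| ≤ C0 * x ^ (1+α) * (1 - Real.log x) ∧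
          |deriv (X1 α (g1 α)) x| ≤ C1 * x ^ α * (1 - Real.log x) ∧
          |deriv (deriv (X1 α (g1 α))) x| ≤ C2 * x ^ (α-1) * (1 - Real.log x) := by
  have hgG : ∀ α : ℝ, 0 < α → ∀ x ∈ Icc (0:ℝ) 1, g1 α x = S10.G α x :=
    fun α hα x hx => S10.g1_eq_G hα (hg1 α hα) hx
  constructor
  · -- regularity
    have hsmooth : ContDiffOn ℝ 2 (fun p : ℝ × ℝ => X1 p.1 (S10.G p.1) p.2)
        (Ioi (0:ℝ) ×ˢ Ioc (0:ℝ) 1) := by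
      intro p hp
      apply ContDiffAt.contDiffWithinAt
      have hp1 : (0:ℝ) < p.1 := hp.1
      have hp2 : (0:ℝ) < p.2 := hp.2.1
      have hGp : ContDiffAt ℝ 2 (fun q : ℝ × ℝ => S10.G q.1 q.2) p := by
        have h := S10.contDiffAt_G (n := 2) (by norm_num) hp1 hp2
        rwa [Prod.mk.eta] at h
      have hGpos : 0 < S10.G p.1 p.2 := S10.G_pos hp1 hp2
      have h2 : ContDiffAt ℝ 2 (fun q : ℝ × ℝ => (2:ℝ) ^ q.1) p :=
        contDiffAt_const.rpow contDiffAt_fst (by norm_num)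
      have h3 : ContDiffAt ℝ 2 (fun q : ℝ × ℝ => S10.G q.1 q.2 ^ (1 + q.1)) p :=
        hGp.rpow (contDiffAt_const.add contDiffAt_fst) hGpos.ne'
      have h4 : ContDiffAt ℝ 2 (fun q : ℝ × ℝ => Real.log 2 + Real.log (S10.G q.1 q.2)) p :=
        contDiffAt_const.add (hGp.log hGpos.ne')
      have h5 := (h2.mul h3).mul h4
      exact h5
    apply hsmooth.congr
    intro p hp
    have hp1 : (0:ℝ) < p.1 := hp.1
    simp only [X1]
    rw [hgG p.1 hp1 p.2 ⟨hp.2.1.le, hp.2.2⟩]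
  · -- bounds
    intro αl αu βu hαl hαlu hαu1 hβu hαβ
    refine ⟨6, 14, 222, by norm_num, by norm_num, by norm_num, ?_⟩
    intro α hα β hβ x hx
    have hα0 : 0 < α := lt_of_lt_of_le hαl hα.1
    have hα1 : α < 1 := lt_of_le_of_lt hα.2 hαu1
    have hx0 : 0 < x := hx.1
    have hx1 : x ≤ 1 := hx.2
    have hvaleq : ∀ t ∈ Icc (0:ℝ) 1, X1 α (g1 α) t = X1 α (S10.G α) t := by
      intro t ht; simp only [X1]; rw [hgG α hα0 t ht]
    have hderiv_eq : ∀ t ∈ Ioo (0:ℝ) 1, deriv (X1 α (g1 α)) t = deriv (X1 α (S10.G α)) t := by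
      intro t ht
      have hev : X1 α (g1 α) =ᶠ[𝓝 t] X1 α (S10.G α) := by
        filter_upwards [Ioo_mem_nhds ht.1 ht.2] with s hs
        exact hvaleq s ⟨hs.1.le, hs.2.le⟩
      exact hev.deriv_eq
    have hmemIic : Ioc (0:ℝ) 1 ∈ 𝓝[Iic 1] (1:ℝ) := by
      rw [← Set.Ioi_inter_Iic]
      exact inter_mem (mem_nhdsWithin_of_mem_nhds (Ioi_mem_nhds one_pos)) self_mem_nhdsWithin
    refine ⟨?_, ?_, ?_⟩
    · rw [hvaleq x ⟨hx0.le, hx1⟩]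
      exact S10.bound0 hα0 hα1 hx0 hx1
    · -- first derivative
      rcases lt_or_eq_of_le hx1 with hlt | heq
      · have hev : X1 α (g1 α) =ᶠ[𝓝 x] X1 α (S10.G α) := by
          filter_upwards [Ioo_mem_nhds hx0 hlt] with t ht
          exact hvaleq t ⟨ht.1.le, ht.2.le⟩
        rw [hev.deriv_eq, S10.deriv_X1G_eq hα0 hx0]
        exact S10.bound1 hα0 hα1 hx0 hx1
      · subst heq
        by_cases hD : DifferentiableAt ℝ (X1 α (g1 α)) 1
        · have hevw : X1 α (g1 α) =ᶠ[𝓝[Iic 1] (1:ℝ)] X1 α (S10.G α) :=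
            Filter.eventuallyEq_of_mem hmemIic fun t ht => hvaleq t ⟨ht.1.le, ht.2⟩
          have h1 : HasDerivWithinAt (X1 α (S10.G α)) (deriv (X1 α (g1 α)) 1) (Iic 1) 1 :=
            (hD.hasDerivAt.hasDerivWithinAt).congr_of_eventuallyEq hevw.symm
              (hvaleq 1 ⟨zero_le_one, le_rfl⟩).symm
          have h2 : HasDerivWithinAt (X1 α (S10.G α))
              (S10.uf α (S10.G α 1) / S10.Pf α (S10.G α 1)) (Iic 1) 1 :=
            (S10.hasDerivAt_X1G hα0 one_pos).hasDerivWithinAt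
          rw [(uniqueDiffOn_Iic (1:ℝ) 1 self_mem_Iic).eq_deriv _ h1 h2]
          exact S10.bound1 hα0 hα1 one_pos le_rfl
        · rw [deriv_zero_of_not_differentiableAt hD]
          simp only [abs_zero, Real.log_one, Real.one_rpow]
          norm_num
    · -- second derivative
      rcases lt_or_eq_of_le hx1 with hlt | heq
      · have hev2 : deriv (X1 α (g1 α)) =ᶠ[𝓝 x] deriv (X1 α (S10.G α)) := by
          filter_upwards [Ioo_mem_nhds hx0 hlt] with t ht
          exact hderiv_eq t ht
        rw [hev2.deriv_eq, (S10.hasDerivAt_deriv_X1G hα0 hx0).deriv]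
        exact S10.bound2 hα0 hα1 hx0 hx1
      · subst heq
        by_cases hD : DifferentiableAt ℝ (deriv (X1 α (g1 α))) 1
        · have hevlt : deriv (X1 α (g1 α)) =ᶠ[𝓝[<] (1:ℝ)] deriv (X1 α (S10.G α)) := by
            have hmem : Ioo (0:ℝ) 1 ∈ 𝓝[<] (1:ℝ) := by
              rw [← Set.Ioi_inter_Iio]
              exact inter_mem (mem_nhdsWithin_of_mem_nhds (Ioi_mem_nhds one_pos))
                self_mem_nhdsWithin
            exact Filter.eventuallyEq_of_mem hmem fun t ht => hderiv_eq t ht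
          have contD1 : ContinuousAt (deriv (X1 α (S10.G α))) 1 := by
            have hevd : deriv (X1 α (S10.G α)) =ᶠ[𝓝 (1:ℝ)]
                fun t => S10.uf α (S10.G α t) / S10.Pf α (S10.G α t) := by
              filter_upwards [isOpen_Ioi.eventually_mem one_pos] with t ht
              exact S10.deriv_X1G_eq hα0 ht
            exact ((S10.hasDerivAt_D1 hα0 one_pos).continuousAt).congr hevd.symm
          have hval1 : deriv (X1 α (g1 α)) 1 = deriv (X1 α (S10.G α)) 1 := by
            have t1 : Tendsto (deriv (X1 α (g1 α))) (𝓝[<] (1:ℝ))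
                (𝓝 (deriv (X1 α (g1 α)) 1)) :=
              hD.continuousAt.tendsto.mono_left nhdsWithin_le_nhds
            have t2 : Tendsto (deriv (X1 α (S10.G α))) (𝓝[<] (1:ℝ))
                (𝓝 (deriv (X1 α (S10.G α)) 1)) :=
              contD1.tendsto.mono_left nhdsWithin_le_nhds
            exact tendsto_nhds_unique (Filter.Tendsto.congr' hevlt t1) t2
          have hevw : deriv (X1 α (g1 α)) =ᶠ[𝓝[Iic 1] (1:ℝ)] deriv (X1 α (S10.G α)) := by
            apply Filter.eventuallyEq_of_mem hmemIic
            intro t ht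
            rcases lt_or_eq_of_le ht.2 with h | h
            · exact hderiv_eq t ⟨ht.1, h⟩
            · subst h; exact hval1
          have h1 : HasDerivWithinAt (deriv (X1 α (S10.G α)))
              (deriv (deriv (X1 α (g1 α))) 1) (Iic 1) 1 :=
            (hD.hasDerivAt.hasDerivWithinAt).congr_of_eventuallyEq hevw.symm hval1.symm
          have h2 : HasDerivWithinAt (deriv (X1 α (S10.G α))) (S10.W α 1) (Iic 1) 1 :=
            (S10.hasDerivAt_deriv_X1G hα0 one_pos).hasDerivWithinAt
          rw [(uniqueDiffOn_Iic (1:ℝ) 1 self_mem_Iic).eq_deriv _ h1 h2]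
          exact S10.bound2 hα0 hα1 one_pos le_rfl
        · rw [deriv_zero_of_not_differentiableAt hD]
          simp only [abs_zero, Real.log_one, Real.one_rpow]
          norm_num

end
end
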